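/- Let σ be a finite relational signature. If an ELIQ q ∈ ELIQ^σ is satisfiable wrt an ALCHI ontology O in the signature σ, then q has a singular⁺ characterisation wrt O within ELIQ^σ. -/

import Mathlib

namespace OMQLean

/-! ## Basic objects: constants, variables, atoms, data instances -/

abbrev Const := ℕ
abbrev Var := ℕ

/-- Atoms of data instances: `⊤(a)`, `A(a)`, `P(a,b)` (predicates named by naturals). -/
inductive Atom where
  | top : Const → Atom
  | un : ℕ → Const → Atom
  | bin : ℕ → Const → Const → Atom
deriving DecidableEq

def Atom.consts : Atom → Finset Const
  | .top a => {a}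
  | .un _ a => {a}
  | .bin _ a b => {a, b}

/-- A data instance: a nonempty finite set of atoms. -/
structure DataInstance where
  atoms : Finset Atom
  nonemp : atoms.Nonempty

instance : DecidableEq DataInstance := fun A B =>
  decidable_of_iff (A.atoms = B.atoms) (by cases A; cases B; simp)

/-- The individuals (constants) occurring in a data instance. -/
def DataInstance.ind (A : DataInstance) : Finset Const := A.atoms.biUnion Atom.consts

/-! ## First-order logic over the signature -/

inductive Term where
  | var : Var → Term
  | cst : Const → Term
deriving DecidableEq

inductive Fml where
  | top : Fml
  | bot : Fml
  | eq : Term → Term → Fml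
  | un : ℕ → Term → Fml
  | bin : ℕ → Term → Term → Fml
  | and : Fml → Fml → Fml
  | or : Fml → Fml → Fml
  | imp : Fml → Fml → Fml
  | not : Fml → Fml
  | all : Var → Fml → Fml
  | ex : Var → Fml → Fml
deriving DecidableEq

/-- An ontology is a finite set of first-order sentences. -/
abbrev Ontology := Finset Fml

/-- An interpretation with domain `D`; constants are interpreted injectively
(standard name assumption: distinct constants denote distinct elements). -/
structure Interp (D : Type) where
  cst : Const → D
  cstInj : Function.Injective cst
  un : ℕ → D → Prop
  bin : ℕ → D → D → Prop

def Term.eval {D : Type} (I : Interp D) (ν : Var → D) : Term → D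
  | .var v => ν v
  | .cst c => I.cst c

def Fml.Holds {D : Type} (I : Interp D) : (Var → D) → Fml → Prop
  | _, .top => True
  | _, .bot => False
  | ν, .eq t s => t.eval I ν = s.eval I ν
  | ν, .un A t => I.un A (t.eval I ν)
  | ν, .bin P t s => I.bin P (t.eval I ν) (s.eval I ν)
  | ν, .and f g => f.Holds I ν ∧ g.Holds I ν
  | ν, .or f g => f.Holds I ν ∨ g.Holds I ν
  | ν, .imp f g => f.Holds I ν → g.Holds I ν
  | ν, .not f => ¬ f.Holds I ν
  | ν, .all v f => ∀ d : D, f.Holds I (Function.update ν v d)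
  | ν, .ex v f => ∃ d : D, f.Holds I (Function.update ν v d)

def Interp.satAtom {D : Type} (I : Interp D) : Atom → Prop
  | .top _ => True
  | .un A a => I.un A (I.cst a)
  | .bin P a b => I.bin P (I.cst a) (I.cst b)

def Interp.modelsO {D : Type} (I : Interp D) (O : Ontology) : Prop :=
  ∀ f ∈ O, ∀ ν : Var → D, Fml.Holds I ν f

def Interp.modelsD {D : Type} (I : Interp D) (A : DataInstance) : Prop :=
  ∀ α ∈ A.atoms, I.satAtom α

/-- A formula contains no equality. -/
def Fml.noEq : Fml → Prop
  | .eq _ _ => False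
  | .and f g => f.noEq ∧ g.noEq
  | .or f g => f.noEq ∧ g.noEq
  | .imp f g => f.noEq ∧ g.noEq
  | .not f => f.noEq
  | .all _ f => f.noEq
  | .ex _ f => f.noEq
  | _ => True

def Fml.size : Fml → ℕ
  | .top => 1
  | .bot => 1
  | .eq _ _ => 1
  | .un _ _ => 1
  | .bin _ _ _ => 1
  | .and f g => f.size + g.size + 1
  | .or f g => f.size + g.size + 1
  | .imp f g => f.size + g.size + 1
  | .not f => f.size + 1
  | .all _ f => f.size + 1
  | .ex _ f => f.size + 1

def ontSize (O : Ontology) : ℕ := ∑ f ∈ O, f.size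

/-! ## Conjunctive queries with one answer variable (the variable `0`) -/

inductive CQAtom where
  | top : Var → CQAtom
  | un : ℕ → Var → CQAtom
  | bin : ℕ → Var → Var → CQAtom
deriving DecidableEq

def CQAtom.vars : CQAtom → Finset Var
  | .top v => {v}
  | .un _ v => {v}
  | .bin _ v w => {v, w}

/-- A conjunctive query, identified with its finite set of atoms;
the answer variable is `0`. -/
structure CQ where
  atoms : Finset CQAtom
deriving DecidableEq

instance : Inhabited CQ := ⟨⟨∅⟩⟩

/-- The query `⊤`. -/
def topCQ : CQ := ⟨∅⟩

def CQ.vars (q : CQ) : Finset Var := insert 0 (q.atoms.biUnion CQAtom.vars)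

/-- Conjunction of two CQs (sharing the answer variable). -/
def CQ.and (q₁ q₂ : CQ) : CQ := ⟨q₁.atoms ∪ q₂.atoms⟩

def CQ.size (q : CQ) : ℕ := q.atoms.card + 1

def CQAtom.holds {D : Type} (I : Interp D) (h : Var → D) : CQAtom → Prop
  | .top _ => True
  | .un A v => I.un A (h v)
  | .bin P v w => I.bin P (h v) (h w)

def Interp.satCQ {D : Type} (I : Interp D) (q : CQ) (d : D) : Prop :=
  ∃ h : Var → D, h 0 = d ∧ ∀ α ∈ q.atoms, CQAtom.holds I h α

/-- `cert O A q a`: `a` is a certain answer to `q` over `A` wrt `O`,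
i.e. `O, A ⊨ q(a)`. -/
def cert (O : Ontology) (A : DataInstance) (q : CQ) (a : Const) : Prop :=
  ∀ (D : Type) (I : Interp D), I.modelsO O → I.modelsD A → I.satCQ q (I.cst a)

/-- `O` and `A` are (jointly) satisfiable. -/
def DataInstance.satWith (O : Ontology) (A : DataInstance) : Prop :=
  ∃ (D : Type) (I : Interp D), I.modelsO O ∧ I.modelsD A

/-- `q(x)` is satisfiable wrt `O`: `O ∪ {q(x)}` has a model. -/
def CQ.satWrt (O : Ontology) (q : CQ) : Prop :=
  ∃ (D : Type) (I : Interp D) (d : D), I.modelsO O ∧ I.satCQ q d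

/-- Containment `q₁ ⊨_O q₂`. -/
def containsO (O : Ontology) (q₁ q₂ : CQ) : Prop :=
  ∀ (A : DataInstance) (a : Const), a ∈ A.ind → cert O A q₁ a → cert O A q₂ a

/-- Equivalence `q₁ ≡_O q₂`. -/
def equivO (O : Ontology) (q₁ q₂ : CQ) : Prop :=
  containsO O q₁ q₂ ∧ containsO O q₂ q₁

def CQAtom.mapVar (g : Var → Var) : CQAtom → CQAtom
  | .top v => .top (g v)
  | .un A v => .un A (g v)
  | .bin P v w => .bin P (g v) (g w)

def CQ.mapVars (g : Var → Var) (q : CQ) : CQ := ⟨q.atoms.image (CQAtom.mapVar g)⟩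

def CQAtom.toAtom (g : Var → Const) : CQAtom → Atom
  | .top v => .top (g v)
  | .un A v => .un A (g v)
  | .bin P v w => .bin P (g v) (g w)

def CQAtom.presIn (A : DataInstance) (h : Var → Const) : CQAtom → Prop
  | .top _ => True
  | .un B v => Atom.un B (h v) ∈ A.atoms
  | .bin P v w => Atom.bin P (h v) (h w) ∈ A.atoms

/-- A homomorphism from the CQ `q` to the data instance `A`. -/
def IsHom (q : CQ) (A : DataInstance) (h : Var → Const) : Prop :=
  (∀ v ∈ q.vars, h v ∈ A.ind) ∧ ∀ α ∈ q.atoms, CQAtom.presIn A h α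

def HomSurj (q : CQ) (A : DataInstance) (h : Var → Const) : Prop :=
  ∀ c ∈ A.ind, ∃ v ∈ q.vars, h v = c

/-- The pointed data instance induced by a CQ: replace every variable `v` by the
constant `v` (distinct fresh constants); the answer variable `0` becomes the point `0`. -/
def inducedDI (q : CQ) : DataInstance :=
  ⟨insert (Atom.top 0) (q.atoms.image (CQAtom.toAtom id)), Finset.insert_nonempty _ _⟩

/-- `hat` witnesses that `O` admits containment reduction: conditions (cr1)-(cr3). -/
structure CRWitness (O : Ontology) (hat : CQ → DataInstance × Const) : Prop where
  mem : ∀ q : CQ, (hat q).2 ∈ (hat q).1.ind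
  cr1 : ∀ q : CQ, (CQ.satWrt O q ↔ DataInstance.satWith O (hat q).1)
  cr2 : ∀ q : CQ, ∃ h : Var → Const,
    IsHom q (hat q).1 h ∧ h 0 = (hat q).2 ∧ HomSurj q (hat q).1 h
  cr3 : ∀ q : CQ, CQ.satWrt O q →
    ∀ q' : CQ, (containsO O q q' ↔ cert O (hat q).1 q' (hat q).2)

def AdmitsCR (O : Ontology) : Prop := ∃ hat, CRWitness O hat

/-! ## Example sets, unique characterisations, frontiers, meet-reducibility, split-partners -/

/-- An example set: finite sets of positive and negative pointed data instances. -/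
structure ExampleSet where
  pos : Finset (DataInstance × Const)
  neg : Finset (DataInstance × Const)

def ExampleSet.wf (E : ExampleSet) : Prop :=
  (∀ p ∈ E.pos, p.2 ∈ p.1.ind) ∧ (∀ p ∈ E.neg, p.2 ∈ p.1.ind)

def fits (O : Ontology) (q : CQ) (E : ExampleSet) : Prop :=
  (∀ p ∈ E.pos, cert O p.1 q p.2) ∧ (∀ p ∈ E.neg, ¬ cert O p.1 q p.2)

/-- `E` uniquely characterises `q` wrt `O` within the class `Q`. -/
def uniqChar (O : Ontology) (Q : Set CQ) (q : CQ) (E : ExampleSet) : Prop :=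
  E.wf ∧ fits O q E ∧ ∀ q' ∈ Q, fits O q' E → equivO O q q'

def ExampleSet.size (E : ExampleSet) : ℕ :=
  (∑ p ∈ E.pos, (p.1.atoms.card + 1)) + (∑ p ∈ E.neg, (p.1.atoms.card + 1))

/-- A frontier of `q` wrt `O` within the class `Q`. -/
def IsFrontier (O : Ontology) (Q : Set CQ) (q : CQ) (F : Set CQ) : Prop :=
  F ⊆ Q ∧ (∀ q' ∈ F, containsO O q q' ∧ ¬ containsO O q' q) ∧
  ∀ q'' ∈ Q, containsO O q q'' → (containsO O q'' q ∨ ∃ q' ∈ F, containsO O q' q'')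

/-- `r` is meet-reducible wrt `O` within `Q`. -/
def MeetReducible (O : Ontology) (Q : Set CQ) (r : CQ) : Prop :=
  ∃ r₁ ∈ Q, ∃ r₂ ∈ Q, equivO O r (CQ.and r₁ r₂) ∧ ¬ equivO O r r₁ ∧ ¬ equivO O r r₂

/-- `O` admits singular⁺ characterisations within `Q` (via the containment-reduction map `hat`):
every satisfiable query in `Q` has a unique characterisation with positive part `{hat q}`. -/
def AdmitsSingPlus (O : Ontology) (hat : CQ → DataInstance × Const) (Q : Set CQ) : Prop :=
  ∀ q ∈ Q, CQ.satWrt O q →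
    ∃ N : Finset (DataInstance × Const), uniqChar O Q q ⟨{hat q}, N⟩

/-- `O` admits singular⁺ characterisations within `Q` of size bounded by the polynomial `p`. -/
def PolySingPlus (O : Ontology) (hat : CQ → DataInstance × Const) (Q : Set CQ)
    (p : Polynomial ℕ) : Prop :=
  ∀ q ∈ Q, CQ.satWrt O q →
    ∃ N : Finset (DataInstance × Const), uniqChar O Q q ⟨{hat q}, N⟩ ∧
      ExampleSet.size ⟨{hat q}, N⟩ ≤ p.eval q.size

/-! ## Signatures -/

/-- A finite relational signature: a finite set of unary and of binary predicate names. -/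
abbrev Sig := Finset ℕ × Finset ℕ

def Atom.inSig (σ : Sig) : Atom → Prop
  | .top _ => True
  | .un A _ => A ∈ σ.1
  | .bin P _ _ => P ∈ σ.2

def DataInstance.inSig (σ : Sig) (A : DataInstance) : Prop := ∀ α ∈ A.atoms, α.inSig σ

def CQAtom.inSig (σ : Sig) : CQAtom → Prop
  | .top _ => True
  | .un A _ => A ∈ σ.1
  | .bin P _ _ => P ∈ σ.2

def CQ.inSig (σ : Sig) (q : CQ) : Prop := ∀ α ∈ q.atoms, α.inSig σ

def Fml.inSig (σ : Sig) : Fml → Prop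
  | .top => True
  | .bot => True
  | .eq _ _ => True
  | .un A _ => A ∈ σ.1
  | .bin P _ _ => P ∈ σ.2
  | .and f g => f.inSig σ ∧ g.inSig σ
  | .or f g => f.inSig σ ∧ g.inSig σ
  | .imp f g => f.inSig σ ∧ g.inSig σ
  | .not f => f.inSig σ
  | .all _ f => f.inSig σ
  | .ex _ f => f.inSig σ

/-- The restriction `Q^σ` of a class of queries to the signature `σ`. -/
def Qsig (Q : Set CQ) (σ : Sig) : Set CQ := {s | s ∈ Q ∧ s.inSig σ}

/-- `S` is a split-partner for the finite set `Qf` of queries wrt `O` within the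
class `Qcls` of `σ`-queries. -/
def IsSplitPartner (O : Ontology) (σ : Sig) (Qcls : Set CQ) (Qf : Finset CQ)
    (S : Finset (DataInstance × Const)) : Prop :=
  (∀ p ∈ S, p.1.inSig σ ∧ p.2 ∈ p.1.ind) ∧
  ∀ q' ∈ Qcls, ((∃ p ∈ S, cert O p.1 q' p.2) ↔ ∀ q ∈ Qf, ¬ containsO O q' q)

def splitSize (S : Finset (DataInstance × Const)) : ℕ := ∑ p ∈ S, (p.1.atoms.card + 1)

def finsetCQSize (Qf : Finset CQ) : ℕ := ∑ s ∈ Qf, s.size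

/-- `q' ⊨_O ⊥`. -/
def containsBot (O : Ontology) (q' : CQ) : Prop :=
  ∀ (A : DataInstance) (a : Const), a ∈ A.ind → cert O A q' a → ¬ A.satWith O

/-- `S` is a split-partner for `{⊥(x)}` wrt `O` within `Qcls`. -/
def IsBotSplitPartner (O : Ontology) (σ : Sig) (Qcls : Set CQ)
    (S : Finset (DataInstance × Const)) : Prop :=
  (∀ p ∈ S, p.1.inSig σ ∧ p.2 ∈ p.1.ind) ∧
  ∀ q' ∈ Qcls, ((∃ p ∈ S, cert O p.1 q' p.2) ↔ ¬ containsBot O q')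

/-! ## Description logic: roles, DL-Lite_F, ALCHI, ELIQs -/

inductive DLRole where
  | nm : ℕ → DLRole
  | inv : ℕ → DLRole
deriving DecidableEq

def DLRole.fml (S : DLRole) (x y : Var) : Fml :=
  match S with
  | .nm P => .bin P (.var x) (.var y)
  | .inv P => .bin P (.var y) (.var x)

def DLRole.inSig (σ : Sig) : DLRole → Prop
  | .nm P => P ∈ σ.2
  | .inv P => P ∈ σ.2

/-- Basic concepts of DL-Lite: a concept name or `∃ S`. -/
inductive DLBasic where
  | cn : ℕ → DLBasic
  | ex : DLRole → DLBasic
deriving DecidableEq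

/-- The standard translation of a basic concept, with free variable `0`. -/
def DLBasic.fml : DLBasic → Fml
  | .cn A => .un A (.var 0)
  | .ex S => .ex 1 (S.fml 0 1)

/-- DL-Lite_F axioms: concept inclusions, concept disjointness, functionality. -/
inductive DLLiteFAx where
  | incl : DLBasic → DLBasic → DLLiteFAx
  | disj : DLBasic → DLBasic → DLLiteFAx
  | func : DLRole → DLLiteFAx
deriving DecidableEq

def DLLiteFAx.fml : DLLiteFAx → Fml
  | .incl B B' => .all 0 (.imp B.fml B'.fml)
  | .disj B B' => .all 0 (.imp (.and B.fml B'.fml) .bot)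
  | .func S => .all 0 (.all 1 (.all 2 (.imp (.and (S.fml 0 1) (S.fml 0 2))
      (.eq (.var 1) (.var 2)))))

/-- `O` is a DL-Lite_F ontology. -/
def IsDLLiteF (O : Ontology) : Prop := ∀ f ∈ O, ∃ ax : DLLiteFAx, f = ax.fml

/-- ALCHI concepts. -/
inductive AConcept where
  | top : AConcept
  | cn : ℕ → AConcept
  | and : AConcept → AConcept → AConcept
  | not : AConcept → AConcept
  | ex : DLRole → AConcept → AConcept
deriving DecidableEq

/-- Standard translation of an ALCHI concept with free variable `v`
(quantified variables increase). -/
def AConcept.fml : AConcept → Var → Fml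
  | .top, _ => .top
  | .cn A, v => .un A (.var v)
  | .and C D, v => .and (C.fml v) (D.fml v)
  | .not C, v => .not (C.fml v)
  | .ex S C, v => .ex (v+1) (.and (S.fml v (v+1)) (C.fml (v+1)))

def AConcept.inSig (σ : Sig) : AConcept → Prop
  | .top => True
  | .cn A => A ∈ σ.1
  | .and C D => C.inSig σ ∧ D.inSig σ
  | .not C => C.inSig σ
  | .ex S C => S.inSig σ ∧ C.inSig σ

/-- ALCHI axioms: concept inclusions and role inclusions. -/
inductive ALCHIAx where
  | ci : AConcept → AConcept → ALCHIAx
  | ri : DLRole → DLRole → ALCHIAx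
deriving DecidableEq

def ALCHIAx.fml : ALCHIAx → Fml
  | .ci C D => .all 0 (.imp (C.fml 0) (D.fml 0))
  | .ri S S' => .all 0 (.all 1 (.imp (S.fml 0 1) (S'.fml 0 1)))

def ALCHIAx.inSig (σ : Sig) : ALCHIAx → Prop
  | .ci C D => C.inSig σ ∧ D.inSig σ
  | .ri S S' => S.inSig σ ∧ S'.inSig σ

/-- `O` is an ALCHI ontology in the signature `σ`. -/
def IsALCHI (σ : Sig) (O : Ontology) : Prop :=
  ∀ f ∈ O, ∃ ax : ALCHIAx, f = ax.fml ∧ ax.inSig σ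

/-- ELIQs: `q ::= ⊤ | A | ∃P.q | ∃P⁻.q | q ∧ q'`. -/
inductive ELIQ where
  | top : ELIQ
  | un : ℕ → ELIQ
  | exN : ℕ → ELIQ → ELIQ
  | exI : ℕ → ELIQ → ELIQ
  | and : ELIQ → ELIQ → ELIQ
deriving DecidableEq

def ELIQ.size : ELIQ → ℕ
  | .top => 1
  | .un _ => 1
  | .exN _ e => e.size + 1
  | .exI _ e => e.size + 1
  | .and e₁ e₂ => e₁.size + e₂.size + 1

def ELIQ.inSig (σ : Sig) : ELIQ → Prop
  | .top => True
  | .un A => A ∈ σ.1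
  | .exN P e => P ∈ σ.2 ∧ e.inSig σ
  | .exI P e => P ∈ σ.2 ∧ e.inSig σ
  | .and e₁ e₂ => e₁.inSig σ ∧ e₂.inSig σ

/-- Atoms of the tree-shaped CQ of an ELIQ: root variable `v`, fresh variables from `n`.
Returns the atoms and the next fresh variable. -/
def ELIQ.atomsAux : ELIQ → Var → ℕ → Finset CQAtom × ℕ
  | .top, _, n => (∅, n)
  | .un A, v, n => ({CQAtom.un A v}, n)
  | .exN P e, v, n =>
      let r := e.atomsAux n (n+1)
      (insert (CQAtom.bin P v n) r.1, r.2)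
  | .exI P e, v, n =>
      let r := e.atomsAux n (n+1)
      (insert (CQAtom.bin P n v) r.1, r.2)
  | .and e₁ e₂, v, n =>
      let r₁ := e₁.atomsAux v n
      let r₂ := e₂.atomsAux v r₁.2
      (r₁.1 ∪ r₂.1, r₂.2)

/-- The tree-shaped CQ corresponding to an ELIQ (answer variable `0`). -/
def ELIQ.toCQ (e : ELIQ) : CQ := ⟨(e.atomsAux 0 1).1⟩

/-- The class of all `σ`-ELIQs, as a class of CQs. -/
def ELIQclass (σ : Sig) : Set CQ := {q | ∃ e : ELIQ, e.inSig σ ∧ q = e.toCQ}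

/-- The class of all ELIQs, as a class of CQs. -/
def ELIQall : Set CQ := {q | ∃ e : ELIQ, q = e.toCQ}

/-- A CQ-frontier for a query `q` wrt `O` (competitors range over ELIQs). -/
def IsCQFrontier (O : Ontology) (q : CQ) (F : Set CQ) : Prop :=
  (∀ q' ∈ F, ∀ e : ELIQ, containsO O q' e.toCQ →
    containsO O q e.toCQ ∧ ¬ containsO O e.toCQ q) ∧
  ∀ e : ELIQ, containsO O q e.toCQ → ¬ containsO O e.toCQ q →
    ∃ q' ∈ F, containsO O q' e.toCQ

/-! ## Temporal data instances and temporal path queries -/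

/-- The "empty" data instance `∅ = {⊤(a)}` (semantically inert padding). -/
def DataInstance.empty : DataInstance := ⟨{Atom.top 0}, by simp⟩

/-- A temporal data instance: a nonempty finite sequence of data instances,
all over the same set `inds` of individuals (implicitly padded with `⊤`-atoms). -/
structure TDI where
  seq : List DataInstance
  ne : seq ≠ []
  inds : Finset Const
  ok : ∀ A ∈ seq, A.ind ⊆ inds

/-- The data instance at timestamp `ℓ` (the empty instance beyond the end). -/
def TDI.nth (D : TDI) (ℓ : ℕ) : DataInstance := D.seq.getD ℓ DataInstance.empty

def TDI.satWith (O : Ontology) (D : TDI) : Prop := ∀ A ∈ D.seq, A.satWith O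

def TDI.size (D : TDI) : ℕ := (D.seq.map (fun A => A.atoms.card + 1)).sum

/-- Temporal operators: `○` (next), `◇` (sometime strictly later), `◇r` (now or later). -/
inductive TOp where
  | nxt : TOp
  | dia : TOp
  | diar : TOp
deriving DecidableEq

instance : Inhabited TOp := ⟨TOp.nxt⟩

/-- A temporal path query `r₀ ∧ o₁(r₁ ∧ o₂(r₂ ∧ ⋯ ∧ oₙ rₙ))` from the class
`LTL_p^{○◇◇r}(Q)`, given by the head `r₀` and the list `[(o₁,r₁),…,(oₙ,rₙ)]`. -/
structure TPQ where
  head : CQ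
  tail : List (TOp × CQ)

/-- Temporal depth. -/
def TPQ.tdp (q : TPQ) : ℕ := q.tail.length

/-- The domain query at position `j` (`0 ≤ j ≤ tdp`). -/
def TPQ.r (q : TPQ) (j : ℕ) : CQ := if j = 0 then q.head else (q.tail.getD (j-1) default).2

/-- The temporal operator between positions `j-1` and `j` (for `1 ≤ j ≤ tdp`). -/
def TPQ.op (q : TPQ) (j : ℕ) : TOp := (q.tail.getD (j-1) default).1

def TPQ.size (q : TPQ) : ℕ := q.head.size + (q.tail.map (fun p => p.2.size + 1)).sum

/-- The query is built from domain queries in `Q`. -/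
def TPQ.overQ (Q : Set CQ) (q : TPQ) : Prop := q.head ∈ Q ∧ ∀ p ∈ q.tail, p.2 ∈ Q

/-- The query uses only `○` and `◇` (no `◇r`). -/
def TPQ.noDiar (q : TPQ) : Prop := ∀ p ∈ q.tail, p.1 ≠ TOp.diar

def entailsAux (O : Ontology) (D : TDI) (a : Const) :
    List (TOp × CQ) → ℕ → CQ → Prop
  | [], ℓ, r => cert O (D.nth ℓ) r a
  | (op, r') :: rest, ℓ, r =>
      cert O (D.nth ℓ) r a ∧
      match op with
      | .nxt => entailsAux O D a rest (ℓ+1) r'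
      | .dia => ∃ m, ℓ < m ∧ entailsAux O D a rest m r'
      | .diar => ∃ m, ℓ ≤ m ∧ entailsAux O D a rest m r'

/-- `O, D, 0, a ⊨ q` (everything is entailed if `O` and `D` are unsatisfiable). -/
def entailsT (O : Ontology) (D : TDI) (a : Const) (q : TPQ) : Prop :=
  ¬ D.satWith O ∨ entailsAux O D a q.tail 0 q.head

/-- Equivalence of temporal path queries wrt `O`: same entailment at time `0` on all
pointed temporal data instances. -/
def equivT (O : Ontology) (q₁ q₂ : TPQ) : Prop :=
  ∀ (D : TDI) (a : Const), a ∈ D.inds → (entailsT O D a q₁ ↔ entailsT O D a q₂)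

/-- A temporal example set (finite sets of pointed temporal data instances, as lists). -/
structure TExampleSet where
  pos : List (TDI × Const)
  neg : List (TDI × Const)

def TExampleSet.wf (E : TExampleSet) : Prop :=
  (∀ p ∈ E.pos, p.2 ∈ p.1.inds) ∧ (∀ p ∈ E.neg, p.2 ∈ p.1.inds)

def TExampleSet.size (E : TExampleSet) : ℕ :=
  (E.pos.map (fun p => p.1.size + 1)).sum + (E.neg.map (fun p => p.1.size + 1)).sum

def fitsT (O : Ontology) (q : TPQ) (E : TExampleSet) : Prop :=
  (∀ p ∈ E.pos, entailsT O p.1 p.2 q) ∧ (∀ p ∈ E.neg, ¬ entailsT O p.1 p.2 q)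

/-- `E` uniquely characterises the temporal query `q` wrt `O` within the class `C`. -/
def uniqCharT (O : Ontology) (C : Set TPQ) (q : TPQ) (E : TExampleSet) : Prop :=
  E.wf ∧ fitsT O q E ∧ ∀ q' ∈ C, fitsT O q' E → equivT O q q'

def TPQclass (Q : Set CQ) : Set TPQ := {q | q.overQ Q}
def TPQclassDepth (Q : Set CQ) (n : ℕ) : Set TPQ := {q | q.overQ Q ∧ q.tdp ≤ n}
def TPQclassND (Q : Set CQ) : Set TPQ := {q | q.overQ Q ∧ q.noDiar}

/-! ### Normal form, lone conjuncts, safety -/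

/-- Normal form of a path query wrt `O` (conditions (n1)-(n5), stated on the
sequence representation: `○` corresponds to `suc`, `◇` to `<`, `◇r` to `≤`;
positions `j ≥ 1` whose query is `≡_O ⊤` are internal to a relation sequence `R_i`). -/
def NormalForm (O : Ontology) (q : TPQ) : Prop :=
  ∀ j, 1 ≤ j → j ≤ q.tdp →
    (equivO O (q.r j) topCQ →
        (j < q.tdp ∧ q.op j = q.op (j+1) ∧ q.op j ≠ TOp.diar)) ∧
    (q.op j = TOp.diar → (j = q.tdp ∨ q.op (j+1) ≠ TOp.nxt) →
        ¬ containsO O (q.r (j-1)) (q.r j)) ∧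
    (q.op j = TOp.diar → 2 ≤ j → q.op (j-1) ≠ TOp.nxt →
        ¬ containsO O (q.r j) (q.r (j-1))) ∧
    (q.op j = TOp.diar → CQ.satWrt O (CQ.and (q.r (j-1)) (q.r j)))

/-- `q` has a lone conjunct wrt `O` within `Q`: a primitive block `q_i` (`i > 0`)
whose query is meet-reducible wrt `O` within `Q`. -/
def HasLoneConjunct (O : Ontology) (Q : Set CQ) (q : TPQ) : Prop :=
  ∃ j, 1 ≤ j ∧ j ≤ q.tdp ∧ q.op j ≠ TOp.nxt ∧
    (j = q.tdp ∨ q.op (j+1) ≠ TOp.nxt) ∧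
    ¬ equivO O (q.r j) topCQ ∧ MeetReducible O Q (q.r j)

/-- `q` is safe wrt `O`: equivalent wrt `O` to a query in normal form without
lone conjuncts. -/
def Safe (O : Ontology) (Q : Set CQ) (q : TPQ) : Prop :=
  ∃ q' : TPQ, q'.overQ Q ∧ NormalForm O q' ∧ ¬ HasLoneConjunct O Q q' ∧ equivT O q q'

/-! ### b-normal temporal data instances built from blocks of queries -/

def listInds (L : List DataInstance) : Finset Const :=
  L.foldr (fun A s => A.ind ∪ s) ∅

theorem mem_listInds {L : List DataInstance} {A : DataInstance} (h : A ∈ L) :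
    A.ind ⊆ listInds L := by
  induction L with
  | nil => simp at h
  | cons B T ih =>
    rw [List.mem_cons] at h
    rcases h with rfl | h
    · exact Finset.subset_union_left
    · exact (ih h).trans Finset.subset_union_right

/-- Assemble a list of data instances into a temporal data instance. -/
def mkTDI : List DataInstance → TDI
  | [] => { seq := [DataInstance.empty], ne := by simp,
            inds := listInds [DataInstance.empty], ok := fun _ h => mem_listInds h }
  | A :: L => { seq := A :: L, ne := by simp,
                inds := listInds (A :: L), ok := fun _ h => mem_listInds h }

/-- The `b`-normal sequence `D_0 ∅^b D_1 ∅^b ⋯ ∅^b D_n` determined by the block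
structure `bs` of queries, with `D_i = ŝ_0^i … ŝ_{k_i}^i`. -/
def bSeq (hat : CQ → DataInstance × Const) (b : ℕ) (bs : List (List CQ)) :
    List DataInstance :=
  List.intercalate (List.replicate b DataInstance.empty)
    (bs.map (List.map (fun s => (hat s).1)))

/-- The first timestamp of block `i` in the assembled `b`-normal instance. -/
def dStart (bs : List (List CQ)) (b i : ℕ) : ℕ :=
  ((bs.take i).map List.length).sum + b * i

/-- The block structure `bs` describes a `b`-normal temporal data instance wrt `O`. -/
def BNormal (O : Ontology) (b : ℕ) (bs : List (List CQ)) : Prop :=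
  bs ≠ [] ∧ (∀ blk ∈ bs, blk ≠ [] ∧ blk.length ≤ b) ∧
  ∀ i < bs.length,
    (0 < i → ¬ equivO O ((bs.getD i []).headD default) topCQ) ∧
    ((0 < i ∨ 1 < (bs.getD i []).length) →
      ¬ equivO O ((bs.getD i []).getLastD default) topCQ)

/-- No block of the data instance is a lone conjunct wrt `O` within `Q`. -/
def NoLoneConjuncts (O : Ontology) (Q : Set CQ) (bs : List (List CQ)) : Prop :=
  ∀ i, 0 < i → i < bs.length → ∀ s, bs.getD i [] = [s] → ¬ MeetReducible O Q s

/-- A root `O`-homomorphism from the path query `q` into the pointed temporal data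
instance `(D, a)`. -/
def RootHom (O : Ontology) (q : TPQ) (D : TDI) (a : Const) (h : ℕ → ℕ) : Prop :=
  h 0 = 0 ∧
  (∀ j ≤ q.tdp, h j < D.seq.length ∧ cert O (D.nth (h j)) (q.r j) a) ∧
  ∀ j, 1 ≤ j → j ≤ q.tdp →
    match q.op j with
    | .nxt => h j = h (j-1) + 1
    | .dia => h (j-1) < h j
    | .diar => h (j-1) ≤ h j

/-- Position `j` of `q` belongs to a block (rather than being internal to a
relation sequence `R_i`). -/
def Blockish (O : Ontology) (q : TPQ) (j : ℕ) : Prop :=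
  j = 0 ∨ q.op j = TOp.nxt ∨ ¬ equivO O (q.r j) topCQ

/-- The index of the block of `q` containing position `j`. -/
noncomputable def qBlockIdx (O : Ontology) (q : TPQ) (j : ℕ) : ℕ :=
  {j' : ℕ | j' < j ∧ Blockish O q (j'+1) ∧ q.op (j'+1) ≠ TOp.nxt}.ncard

/-- The conjunction `r_ℓ = ⋀_{h(t) = ℓ} r_t` of all domain queries of `q` mapped to
timestamp `ℓ` by `h`. -/
def conjAt (q : TPQ) (h : ℕ → ℕ) (ℓ : ℕ) : CQ :=
  ⟨((Finset.range (q.tdp + 1)).filter (fun j => h j = ℓ)).biUnion (fun j => (q.r j).atoms)⟩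

/-- `h` is data surjective. -/
def DataSurj (O : Ontology) (hat : CQ → DataInstance × Const) (N : CQ → Finset CQ)
    (bs : List (List CQ)) (b : ℕ) (q : TPQ) (h : ℕ → ℕ) : Prop :=
  ∀ i j, i < bs.length → j < (bs.getD i []).length →
    (∃ t ≤ q.tdp, h t = dStart bs b i + j) →
    ¬ equivO O ((bs.getD i []).getD j default) topCQ →
    ∀ s' ∈ N ((bs.getD i []).getD j default),
      ¬ cert O (hat s').1 (conjAt q h (dStart bs b i + j)) (hat s').2

/-- `h` is a root `O`-isomorphism from `q` onto the `b`-normal instance given by `bs`. -/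
def RootIso (O : Ontology) (hat : CQ → DataInstance × Const) (N : CQ → Finset CQ)
    (bs : List (List CQ)) (b : ℕ) (a : Const) (q : TPQ) (h : ℕ → ℕ) : Prop :=
  RootHom O q (mkTDI (bSeq hat b bs)) a h ∧
  DataSurj O hat N bs b q h ∧
  qBlockIdx O q q.tdp + 1 = bs.length ∧
  ∀ i < bs.length,
    Set.BijOn h {j | j ≤ q.tdp ∧ Blockish O q j ∧ qBlockIdx O q j = i}
      {ℓ | ∃ j < (bs.getD i []).length, ℓ = dStart bs b i + j}

/-- The rewrite rules (a)-(e) on block structures of `b`-normal temporal data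
instances (negative examples are drawn from `N`). -/
inductive RuleStep (O : Ontology) (N : CQ → Finset CQ) :
    List (List CQ) → List (List CQ) → Prop
  | ruleA (pre post : List (List CQ)) (u v : List CQ) (s s' : CQ)
      (hs : ¬ equivO O s topCQ) (hs' : s' ∈ N s) (hpos : pre ≠ [] ∨ u ≠ []) :
      RuleStep O N (pre ++ (u ++ s :: v) :: post) (pre ++ (u ++ s' :: v) :: post)
  | ruleB (pre post : List (List CQ)) (u v : List CQ) (x y : CQ) :
      RuleStep O N (pre ++ (u ++ x :: y :: v) :: post)
        (pre ++ (u ++ [x]) :: (y :: v) :: post)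
  | ruleC (pre post : List (List CQ)) (u v : List CQ) (s : CQ)
      (hs : ¬ equivO O s topCQ) (hu : u ≠ []) (hv : v ≠ []) :
      RuleStep O N (pre ++ (u ++ s :: v) :: post)
        (pre ++ (u ++ [s]) :: (s :: v) :: post)
  | ruleD1 (pre post : List (List CQ)) (u : List CQ) (x s' : CQ)
      (hu : u ≠ []) (hs' : s' ∈ N x) :
      RuleStep O N (pre ++ (u ++ [x]) :: post) (pre ++ (u ++ [s']) :: [x] :: post)
  | ruleD2 (pre post : List (List CQ)) (v : List CQ) (x s' : CQ)
      (hv : v ≠ []) (hs' : s' ∈ N x) :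
      RuleStep O N (pre ++ (x :: v) :: post) (pre ++ [x] :: (s' :: v) :: post)
  | ruleE1 (post : List (List CQ)) (x s' : CQ)
      (hx : ¬ equivO O x topCQ) (hs' : s' ∈ N x) :
      RuleStep O N ([x] :: post) ([s'] :: [x] :: post)
  | ruleE2 (post : List (List CQ)) (v : List CQ) (x : CQ)
      (hx : ¬ equivO O x topCQ) (hv : v ≠ []) :
      RuleStep O N ((x :: v) :: post) ([x] :: (x :: v) :: post)

/-! ### Building a path query from blocks and separators -/

def blockChain (blk : List CQ) : List (TOp × CQ) :=
  (blk.drop 1).map (fun s => (TOp.nxt, s))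

/-- The relation sequence `R_i`: value `0` encodes a single `≤`, value `v ≥ 1`
encodes `v`-many `<` (with `⊤` on the internal positions); `s` is the first query
of the next block. -/
def sepChain : ℕ → CQ → List (TOp × CQ)
  | 0, s => [(TOp.diar, s)]
  | (k+1), s => List.replicate k (TOp.dia, topCQ) ++ [(TOp.dia, s)]

def buildTail : List (List CQ) → List ℕ → List (TOp × CQ)
  | [], _ => []
  | [blk], _ => blockChain blk
  | blk :: blk' :: rest, [] =>
      blockChain blk ++ sepChain 1 (blk'.headD default) ++ buildTail (blk' :: rest) []
  | blk :: blk' :: rest, sep :: seps =>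
      blockChain blk ++ sepChain sep (blk'.headD default) ++ buildTail (blk' :: rest) seps

/-- The path query `q_0 R_1 q_1 ⋯ R_n q_n` with blocks `bs` and separators `seps`. -/
def buildTPQ (bs : List (List CQ)) (seps : List ℕ) : TPQ :=
  ⟨(bs.headD []).headD default, buildTail bs seps⟩

/-- The position, in `buildTPQ bs seps`, of the `j`-th query of block `i`. -/
def qPos (bs : List (List CQ)) (seps : List ℕ) (i j : ℕ) : ℕ :=
  ((bs.take i).map List.length).sum + ((seps.take i).map Nat.pred).sum + j

/-! ## Until queries -/

/-- A path query `r₀ ∧ (l₁ U (r₁ ∧ (l₂ U (⋯ (lₙ U rₙ)⋯))))` from `LTL_p^U(Q^σ)`;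
`none` encodes `l_i = ⊥`. -/
structure UQ where
  head : CQ
  tail : List (Option CQ × CQ)

def uEntailsAux (O : Ontology) (D : TDI) (a : Const) :
    List (Option CQ × CQ) → ℕ → CQ → Prop
  | [], ℓ, r => cert O (D.nth ℓ) r a
  | (l, r') :: rest, ℓ, r =>
      cert O (D.nth ℓ) r a ∧
      ∃ m, ℓ < m ∧ uEntailsAux O D a rest m r' ∧
        ∀ k, ℓ < k → k < m →
          match l with
          | none => False
          | some l' => cert O (D.nth k) l' a

def uEntailsT (O : Ontology) (D : TDI) (a : Const) (q : UQ) : Prop :=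
  ¬ D.satWith O ∨ uEntailsAux O D a q.tail 0 q.head

def equivU (O : Ontology) (q₁ q₂ : UQ) : Prop :=
  ∀ (D : TDI) (a : Const), a ∈ D.inds → (uEntailsT O D a q₁ ↔ uEntailsT O D a q₂)

def fitsU (O : Ontology) (q : UQ) (E : TExampleSet) : Prop :=
  (∀ p ∈ E.pos, uEntailsT O p.1 p.2 q) ∧ (∀ p ∈ E.neg, ¬ uEntailsT O p.1 p.2 q)

def uniqCharU (O : Ontology) (C : Set UQ) (q : UQ) (E : TExampleSet) : Prop :=
  E.wf ∧ fitsU O q E ∧ ∀ q' ∈ C, fitsU O q' E → equivU O q q'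

def UQ.size (q : UQ) : ℕ :=
  q.head.size +
    (q.tail.map (fun p => (match p.1 with | none => 1 | some l => l.size) + p.2.size + 1)).sum

/-- Membership of an until path query in `LTL_p^U(Q^σ)`. -/
def UQ.overQsig (Q : Set CQ) (σ : Sig) (q : UQ) : Prop :=
  (q.head ∈ Q ∧ q.head.inSig σ) ∧
  ∀ p ∈ q.tail, (p.2 ∈ Q ∧ p.2.inSig σ) ∧ ∀ l, p.1 = some l → l ∈ Q ∧ l.inSig σ

/-- `q` is `O`-peerless: `r_i ⊭_O l_i` and `l_i ⊭_O r_i`. -/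
def UQ.peerless (O : Ontology) (q : UQ) : Prop :=
  ∀ p ∈ q.tail, ∀ l, p.1 = some l → ¬ containsO O p.2 l ∧ ¬ containsO O l p.2

def UQclass (Q : Set CQ) (σ : Sig) : Set UQ := {q | q.overQsig Q σ}

open Classical
noncomputable section

/-! ### Semantics of roles, concepts and ELIQs -/

def rsat {D : Type} (I : Interp D) : DLRole → D → D → Prop
  | .nm P, d, e => I.bin P d e
  | .inv P, d, e => I.bin P e d

def csat {D : Type} (I : Interp D) : AConcept → D → Prop
  | .top, _ => True
  | .cn A, d => I.un A d
  | .and C C', d => csat I C d ∧ csat I C' d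
  | .not C, d => ¬ csat I C d
  | .ex S C, d => ∃ e, rsat I S d e ∧ csat I C e

def esat {D : Type} (I : Interp D) : ELIQ → D → Prop
  | .top, _ => True
  | .un A, d => I.un A d
  | .exN P e, d => ∃ d', I.bin P d d' ∧ esat I e d'
  | .exI P e, d => ∃ d', I.bin P d' d ∧ esat I e d'
  | .and e₁ e₂, d => esat I e₁ d ∧ esat I e₂ d

lemma role_holds {D : Type} (I : Interp D) (S : DLRole) (x y : Var) (ν : Var → D) :
    Fml.Holds I ν (S.fml x y) ↔ rsat I S (ν x) (ν y) := by
  cases S <;> simp [DLRole.fml, Fml.Holds, rsat, Term.eval]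

lemma fml_csat {D : Type} (I : Interp D) (C : AConcept) :
    ∀ (v : Var) (ν : Var → D), Fml.Holds I ν (C.fml v) ↔ csat I C (ν v) := by
  induction C with
  | top => intro v ν; simp [AConcept.fml, Fml.Holds, csat]
  | cn A => intro v ν; simp [AConcept.fml, Fml.Holds, csat, Term.eval]
  | and C C' ih ih' => intro v ν; simp [AConcept.fml, Fml.Holds, csat, ih, ih']
  | not C ih => intro v ν; simp [AConcept.fml, Fml.Holds, csat, ih]
  | ex S C ih =>
      intro v ν
      simp only [AConcept.fml, Fml.Holds, csat]
      refine exists_congr fun d => ?_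
      rw [role_holds, ih]
      have h1 : Function.update ν (v+1) d v = ν v := by
        exact Function.update_of_ne (Nat.ne_of_lt (Nat.lt_succ_self v)) _ _
      have h2 : Function.update ν (v+1) d (v+1) = d := Function.update_self _ _ _
      rw [h1, h2]

/-- Semantic consequence of a concept inclusion in `O`. -/
lemma modelsO_ci {D : Type} {I : Interp D} {O : Ontology} (hI : I.modelsO O)
    {C C' : AConcept} (hf : (ALCHIAx.ci C C').fml ∈ O) :
    ∀ d, csat I C d → csat I C' d := by
  intro d hd
  have := hI _ hf (fun _ => d)
  simp only [ALCHIAx.fml, Fml.Holds] at this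
  have h := this d
  rw [fml_csat, fml_csat, Function.update_self] at h
  exact h hd

lemma modelsO_ri {D : Type} {I : Interp D} {O : Ontology} (hI : I.modelsO O)
    {S S' : DLRole} (hf : (ALCHIAx.ri S S').fml ∈ O) :
    ∀ d d', rsat I S d d' → rsat I S' d d' := by
  intro d d' hd
  have := hI _ hf (fun _ => d)
  simp only [ALCHIAx.fml, Fml.Holds] at this
  have h := this d d'
  rw [role_holds, role_holds] at h
  simp only [Function.update_self, Function.update_of_ne (by omega : (0:ℕ) ≠ 1)] at h
  exact h hd

/-! ### ALCHI formulas contain no equality and stay in signature -/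

lemma role_noEq (S : DLRole) (x y : Var) : (S.fml x y).noEq := by
  cases S <;> simp [DLRole.fml, Fml.noEq]

lemma concept_noEq (C : AConcept) : ∀ v, (C.fml v).noEq := by
  induction C with
  | top => intro v; simp [AConcept.fml, Fml.noEq]
  | cn A => intro v; simp [AConcept.fml, Fml.noEq]
  | and C C' ih ih' => intro v; exact ⟨ih v, ih' v⟩
  | not C ih => intro v; exact ih v
  | ex S C ih => intro v; exact ⟨role_noEq S v (v+1), ih (v+1)⟩

lemma alchi_noEq {σ : Sig} {O : Ontology} (hO : IsALCHI σ O) : ∀ f ∈ O, f.noEq := by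
  intro f hf
  obtain ⟨ax, rfl, -⟩ := hO f hf
  cases ax with
  | ci C C' => exact ⟨concept_noEq C 0, concept_noEq C' 0⟩
  | ri S S' => exact ⟨role_noEq S 0 1, role_noEq S' 0 1⟩

lemma role_inSig {σ : Sig} {S : DLRole} (h : S.inSig σ) (x y : Var) :
    (S.fml x y).inSig σ := by
  cases S <;> simpa [DLRole.fml, Fml.inSig, DLRole.inSig] using h

lemma concept_inSig {σ : Sig} {C : AConcept} (h : C.inSig σ) : ∀ v, (C.fml v).inSig σ := by
  induction C with
  | top => intro v; trivial
  | cn A => intro v; exact h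
  | and C C' ih ih' => intro v; exact ⟨ih h.1 v, ih' h.2 v⟩
  | not C ih => intro v; exact ih h v
  | ex S C ih => intro v; exact ⟨role_inSig h.1 v (v+1), ih h.2 (v+1)⟩

lemma alchi_inSig {σ : Sig} {O : Ontology} (hO : IsALCHI σ O) : ∀ f ∈ O, f.inSig σ := by
  intro f hf
  obtain ⟨ax, rfl, hax⟩ := hO f hf
  cases ax with
  | ci C C' => exact ⟨concept_inSig hax.1 0, concept_inSig hax.2 0⟩
  | ri S S' => exact ⟨role_inSig hax.1 0 1, role_inSig hax.2 0 1⟩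

/-! ### Pure formulas (no equality, no constant terms) -/

def Fml.pure : Fml → Prop
  | .top => True
  | .bot => True
  | .eq _ _ => False
  | .un _ (.var _) => True
  | .un _ (.cst _) => False
  | .bin _ (.var _) (.var _) => True
  | .bin _ _ _ => False
  | .and f g => f.pure ∧ g.pure
  | .or f g => f.pure ∧ g.pure
  | .imp f g => f.pure ∧ g.pure
  | .not f => f.pure
  | .all _ f => f.pure
  | .ex _ f => f.pure

lemma role_pure (S : DLRole) (x y : Var) : (S.fml x y).pure := by
  cases S <;> simp [DLRole.fml, Fml.pure]

lemma concept_pure (C : AConcept) : ∀ v, (C.fml v).pure := by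
  induction C with
  | top => intro v; trivial
  | cn A => intro v; trivial
  | and C C' ih ih' => intro v; exact ⟨ih v, ih' v⟩
  | not C ih => intro v; exact ih v
  | ex S C ih => intro v; exact ⟨role_pure S v (v+1), ih (v+1)⟩

lemma alchi_pure {σ : Sig} {O : Ontology} (hO : IsALCHI σ O) : ∀ f ∈ O, f.pure := by
  intro f hf
  obtain ⟨ax, rfl, -⟩ := hO f hf
  cases ax with
  | ci C C' => exact ⟨concept_pure C 0, concept_pure C' 0⟩
  | ri S S' => exact ⟨role_pure S 0 1, role_pure S' 0 1⟩

/-! ### Pullback interpretations -/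

def pbMap {D : Type} (f : ℕ → D) : D ⊕ ℕ → D := Sum.elim id f

def pb {D : Type} (I : Interp D) (f : ℕ → D) : Interp (D ⊕ ℕ) where
  cst := Sum.inr
  cstInj := Sum.inr_injective
  un A x := I.un A (pbMap f x)
  bin P x y := I.bin P (pbMap f x) (pbMap f y)

lemma pb_comp_update {D : Type} (f : ℕ → D) (ν : Var → D ⊕ ℕ) (v : Var) (x : D ⊕ ℕ) :
    pbMap f ∘ (Function.update ν v x) = Function.update (pbMap f ∘ ν) v (pbMap f x) := by
  funext y
  by_cases h : y = v
  · subst h; simp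
  · simp [Function.update_of_ne h]

lemma pb_holds {D : Type} (I : Interp D) (f : ℕ → D) :
    ∀ (φ : Fml), φ.pure → ∀ ν, Fml.Holds (pb I f) ν φ ↔ Fml.Holds I (pbMap f ∘ ν) φ := by
  intro φ
  induction φ with
  | top => intro _ ν; simp [Fml.Holds]
  | bot => intro _ ν; simp [Fml.Holds]
  | eq t s => intro h; exact absurd h id
  | un A t =>
      intro h ν
      cases t with
      | var v => simp [Fml.Holds, Term.eval, pb]
      | cst c => exact absurd h id
  | bin P t s =>
      intro h ν
      cases t with
      | var v =>
          cases s with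
          | var w => simp [Fml.Holds, Term.eval, pb]
          | cst c => exact absurd h id
      | cst c => exact absurd h id
  | and φ ψ ihφ ihψ => intro h ν; simp only [Fml.Holds]; rw [ihφ h.1, ihψ h.2]
  | or φ ψ ihφ ihψ => intro h ν; simp only [Fml.Holds]; rw [ihφ h.1, ihψ h.2]
  | imp φ ψ ihφ ihψ => intro h ν; simp only [Fml.Holds]; rw [ihφ h.1, ihψ h.2]
  | not φ ihφ => intro h ν; simp only [Fml.Holds]; rw [ihφ h]
  | all v φ ihφ =>
      intro h ν
      simp only [Fml.Holds]
      constructor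
      · intro H d
        have := ihφ h (Function.update ν v (Sum.inl d)) |>.1 (H (Sum.inl d))
        rwa [pb_comp_update] at this
      · intro H x
        rw [ihφ h, pb_comp_update]
        exact H (pbMap f x)
  | ex v φ ihφ =>
      intro h ν
      simp only [Fml.Holds]
      constructor
      · rintro ⟨x, hx⟩
        refine ⟨pbMap f x, ?_⟩
        have := (ihφ h _).1 hx
        rwa [pb_comp_update] at this
      · rintro ⟨d, hd⟩
        refine ⟨Sum.inl d, ?_⟩
        rw [ihφ h, pb_comp_update]
        exact hd

lemma pb_modelsO {D : Type} {I : Interp D} {O : Ontology} (f : ℕ → D)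
    (hpure : ∀ g ∈ O, g.pure) (hI : I.modelsO O) : (pb I f).modelsO O := by
  intro g hg ν
  rw [pb_holds I f g (hpure g hg)]
  exact hI g hg _

lemma pb_satCQ {D : Type} {I : Interp D} {f : ℕ → D} {q : CQ} {x : D ⊕ ℕ}
    (h : (pb I f).satCQ q x) : I.satCQ q (pbMap f x) := by
  obtain ⟨h0, h0x, hall⟩ := h
  refine ⟨pbMap f ∘ h0, by rw [Function.comp_apply, h0x], ?_⟩
  intro α hα
  have := hall α hα
  cases α <;> simpa [CQAtom.holds, pb] using this

/-! ### The fundamental certain-answer transfer lemma -/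

def Interp.satAtomVia {D : Type} (I : Interp D) (f : ℕ → D) : Atom → Prop
  | .top _ => True
  | .un A c => I.un A (f c)
  | .bin P c c' => I.bin P (f c) (f c')

lemma cert_transfer {O : Ontology} (hpure : ∀ g ∈ O, g.pure) {A : DataInstance}
    {D : Type} (I : Interp D) (f : ℕ → D) (hIO : I.modelsO O)
    (hatoms : ∀ α ∈ A.atoms, I.satAtomVia f α)
    {q' : CQ} {a : Const} (hc : cert O A q' a) : I.satCQ q' (f a) := by
  have hJD : (pb I f).modelsD A := by
    intro α hα
    have := hatoms α hα
    cases α <;> simpa [Interp.satAtom, Interp.satAtomVia, pb, pbMap] using this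
  have := hc _ (pb I f) (pb_modelsO f hpure hIO) hJD
  have h2 := pb_satCQ (f := f) this
  exact h2

/-! ### Signature saturation -/

def satur (σ : Sig) {D : Type} (I : Interp D) : Interp D where
  cst := I.cst
  cstInj := I.cstInj
  un A d := if A ∈ σ.1 then I.un A d else True
  bin P d e := if P ∈ σ.2 then I.bin P d e else True

lemma satur_eval {σ : Sig} {D : Type} (I : Interp D) (ν : Var → D) (t : Term) :
    Term.eval (satur σ I) ν t = Term.eval I ν t := by cases t <;> rfl

lemma satur_holds {σ : Sig} {D : Type} (I : Interp D) :
    ∀ (φ : Fml), φ.inSig σ → ∀ ν, Fml.Holds (satur σ I) ν φ ↔ Fml.Holds I ν φ := by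
  intro φ
  induction φ with
  | top => intro _ ν; simp [Fml.Holds]
  | bot => intro _ ν; simp [Fml.Holds]
  | eq t s => intro _ ν; simp [Fml.Holds, satur_eval]
  | un A t =>
      intro h ν
      simp only [Fml.Holds]
      rw [satur_eval]
      have h' : A ∈ σ.1 := h
      simp [satur, h']
  | bin P t s =>
      intro h ν
      simp only [Fml.Holds]
      rw [satur_eval, satur_eval]
      have h' : P ∈ σ.2 := h
      simp [satur, h']
  | and φ ψ ihφ ihψ => intro h ν; simp only [Fml.Holds]; rw [ihφ h.1, ihψ h.2]
  | or φ ψ ihφ ihψ => intro h ν; simp only [Fml.Holds]; rw [ihφ h.1, ihψ h.2]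
  | imp φ ψ ihφ ihψ => intro h ν; simp only [Fml.Holds]; rw [ihφ h.1, ihψ h.2]
  | not φ ihφ => intro h ν; simp only [Fml.Holds]; rw [ihφ h]
  | all v φ ihφ => intro h ν; simp only [Fml.Holds]; exact forall_congr' fun d => ihφ h _
  | ex v φ ihφ => intro h ν; simp only [Fml.Holds]; exact exists_congr fun d => ihφ h _

lemma satur_satCQ {σ : Sig} {D : Type} {I : Interp D} {q : CQ} (hq : q.inSig σ) {d : D} :
    (satur σ I).satCQ q d ↔ I.satCQ q d := by
  constructor <;> rintro ⟨h, h0, hall⟩ <;> refine ⟨h, h0, fun α hα => ?_⟩ <;>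
    have h1 := hall α hα <;> have h2 := hq α hα
  · cases α with
    | top => trivial
    | un A v => have h2' : A ∈ σ.1 := h2; simpa [CQAtom.holds, satur, h2'] using h1
    | bin P v w => have h2' : P ∈ σ.2 := h2; simpa [CQAtom.holds, satur, h2'] using h1
  · cases α with
    | top => trivial
    | un A v => have h2' : A ∈ σ.1 := h2; simpa [CQAtom.holds, satur, h2'] using h1
    | bin P v w => have h2' : P ∈ σ.2 := h2; simpa [CQAtom.holds, satur, h2'] using h1

/-! ### ELIQ / CQ correspondence -/

lemma cqatom_holds_congr {D : Type} (I : Interp D) {h h' : Var → D} {α : CQAtom}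
    (hag : ∀ x ∈ α.vars, h x = h' x) : CQAtom.holds I h α ↔ CQAtom.holds I h' α := by
  cases α with
  | top v => simp [CQAtom.holds]
  | un A v => simp [CQAtom.holds, hag v (by simp [CQAtom.vars])]
  | bin P v w =>
      simp [CQAtom.holds, hag v (by simp [CQAtom.vars]), hag w (by simp [CQAtom.vars])]

lemma atomsAux_le (e : ELIQ) : ∀ v n, n ≤ (e.atomsAux v n).2 := by
  induction e with
  | top => intro v n; simp [ELIQ.atomsAux]
  | un A => intro v n; simp [ELIQ.atomsAux]
  | exN P e ih =>
      intro v n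
      simp only [ELIQ.atomsAux]
      exact le_trans (Nat.le_succ n) (ih n (n+1))
  | exI P e ih =>
      intro v n
      simp only [ELIQ.atomsAux]
      exact le_trans (Nat.le_succ n) (ih n (n+1))
  | and e₁ e₂ ih₁ ih₂ =>
      intro v n
      simp only [ELIQ.atomsAux]
      exact le_trans (ih₁ v n) (ih₂ v _)

lemma atomsAux_vars (e : ELIQ) : ∀ v n, ∀ α ∈ (e.atomsAux v n).1, ∀ x ∈ α.vars,
    x = v ∨ (n ≤ x ∧ x < (e.atomsAux v n).2) := by
  induction e with
  | top => intro v n α hα; simp [ELIQ.atomsAux] at hα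
  | un A =>
      intro v n α hα x hx
      simp [ELIQ.atomsAux] at hα
      subst hα
      simp [CQAtom.vars] at hx
      exact Or.inl hx
  | exN P e ih =>
      intro v n α hα x hx
      simp only [ELIQ.atomsAux, Finset.mem_insert] at hα
      rcases hα with rfl | hα
      · simp [CQAtom.vars] at hx
        rcases hx with rfl | rfl
        · exact Or.inl rfl
        · exact Or.inr ⟨le_refl _, lt_of_lt_of_le (Nat.lt_succ_self x) (atomsAux_le e x (x+1))⟩
      · rcases ih n (n+1) α hα x hx with rfl | ⟨h1, h2⟩
        · exact Or.inr ⟨le_refl _, lt_of_lt_of_le (Nat.lt_succ_self x) (atomsAux_le e x (x+1))⟩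
        · exact Or.inr ⟨le_trans (Nat.le_succ n) h1, h2⟩
  | exI P e ih =>
      intro v n α hα x hx
      simp only [ELIQ.atomsAux, Finset.mem_insert] at hα
      rcases hα with rfl | hα
      · simp [CQAtom.vars] at hx
        rcases hx with rfl | rfl
        · exact Or.inr ⟨le_refl _, lt_of_lt_of_le (Nat.lt_succ_self x) (atomsAux_le e x (x+1))⟩
        · exact Or.inl rfl
      · rcases ih n (n+1) α hα x hx with rfl | ⟨h1, h2⟩
        · exact Or.inr ⟨le_refl _, lt_of_lt_of_le (Nat.lt_succ_self x) (atomsAux_le e x (x+1))⟩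
        · exact Or.inr ⟨le_trans (Nat.le_succ n) h1, h2⟩
  | and e₁ e₂ ih₁ ih₂ =>
      intro v n α hα x hx
      simp only [ELIQ.atomsAux, Finset.mem_union] at hα
      rcases hα with hα | hα
      · rcases ih₁ v n α hα x hx with rfl | ⟨h1, h2⟩
        · exact Or.inl rfl
        · exact Or.inr ⟨h1, lt_of_lt_of_le h2 (atomsAux_le e₂ v _)⟩
      · rcases ih₂ v (e₁.atomsAux v n).2 α hα x hx with rfl | ⟨h1, h2⟩
        · exact Or.inl rfl
        · exact Or.inr ⟨le_trans (atomsAux_le e₁ v n) h1, h2⟩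

lemma esat_of_atoms {D : Type} (I : Interp D) (e : ELIQ) : ∀ v n (h : Var → D),
    (∀ α ∈ (e.atomsAux v n).1, CQAtom.holds I h α) → esat I e (h v) := by
  induction e with
  | top => intro v n h _; trivial
  | un A =>
      intro v n h hall
      have := hall (.un A v) (by simp [ELIQ.atomsAux])
      exact this
  | exN P e ih =>
      intro v n h hall
      refine ⟨h n, ?_, ?_⟩
      · exact hall (.bin P v n) (by simp [ELIQ.atomsAux])
      · refine ih n (n+1) h fun α hα => hall α ?_
        simp only [ELIQ.atomsAux]
        exact Finset.mem_insert_of_mem hα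
  | exI P e ih =>
      intro v n h hall
      refine ⟨h n, ?_, ?_⟩
      · exact hall (.bin P n v) (by simp [ELIQ.atomsAux])
      · refine ih n (n+1) h fun α hα => hall α ?_
        simp only [ELIQ.atomsAux]
        exact Finset.mem_insert_of_mem hα
  | and e₁ e₂ ih₁ ih₂ =>
      intro v n h hall
      constructor
      · refine ih₁ v n h fun α hα => hall α ?_
        simp only [ELIQ.atomsAux]
        exact Finset.mem_union_left _ hα
      · refine ih₂ v (e₁.atomsAux v n).2 h fun α hα => hall α ?_
        simp only [ELIQ.atomsAux]
        exact Finset.mem_union_right _ hα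

lemma atoms_of_esat {D : Type} (I : Interp D) (e : ELIQ) : ∀ v n, v < n → ∀ d : D,
    esat I e d → ∃ h : Var → D, h v = d ∧ ∀ α ∈ (e.atomsAux v n).1, CQAtom.holds I h α := by
  induction e with
  | top =>
      intro v n _ d _
      exact ⟨fun _ => d, rfl, by simp [ELIQ.atomsAux]⟩
  | un A =>
      intro v n _ d hd
      refine ⟨fun _ => d, rfl, ?_⟩
      intro α hα
      simp [ELIQ.atomsAux] at hα
      subst hα
      exact hd
  | exN P e ih =>
      intro v n hvn d hd
      obtain ⟨d', hbin, hd'⟩ := hd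
      obtain ⟨h', h'n, h'all⟩ := ih n (n+1) (Nat.lt_succ_self n) d' hd'
      refine ⟨Function.update h' v d, Function.update_self _ _ _, ?_⟩
      intro α hα
      simp only [ELIQ.atomsAux, Finset.mem_insert] at hα
      rcases hα with rfl | hα
      · show I.bin P (Function.update h' v d v) (Function.update h' v d n)
        rw [Function.update_self, Function.update_of_ne (Nat.ne_of_gt hvn), h'n]
        exact hbin
      · rw [cqatom_holds_congr I (h' := h')]
        · exact h'all α hα
        · intro x hx
          rcases atomsAux_vars e n (n+1) α hα x hx with rfl | ⟨h1, _⟩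
          · exact Function.update_of_ne (Nat.ne_of_gt hvn) _ _
          · exact Function.update_of_ne (Nat.ne_of_gt (lt_of_lt_of_le (lt_trans hvn (Nat.lt_succ_self n)) h1)) _ _
  | exI P e ih =>
      intro v n hvn d hd
      obtain ⟨d', hbin, hd'⟩ := hd
      obtain ⟨h', h'n, h'all⟩ := ih n (n+1) (Nat.lt_succ_self n) d' hd'
      refine ⟨Function.update h' v d, Function.update_self _ _ _, ?_⟩
      intro α hα
      simp only [ELIQ.atomsAux, Finset.mem_insert] at hα
      rcases hα with rfl | hα
      · show I.bin P (Function.update h' v d n) (Function.update h' v d v)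
        rw [Function.update_self, Function.update_of_ne (Nat.ne_of_gt hvn), h'n]
        exact hbin
      · rw [cqatom_holds_congr I (h' := h')]
        · exact h'all α hα
        · intro x hx
          rcases atomsAux_vars e n (n+1) α hα x hx with rfl | ⟨h1, _⟩
          · exact Function.update_of_ne (Nat.ne_of_gt hvn) _ _
          · exact Function.update_of_ne (Nat.ne_of_gt (lt_of_lt_of_le (lt_trans hvn (Nat.lt_succ_self n)) h1)) _ _
  | and e₁ e₂ ih₁ ih₂ =>
      intro v n hvn d hd
      obtain ⟨h₁, h₁v, h₁all⟩ := ih₁ v n hvn d hd.1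
      have hvm : v < (e₁.atomsAux v n).2 := lt_of_lt_of_le hvn (atomsAux_le e₁ v n)
      obtain ⟨h₂, h₂v, h₂all⟩ := ih₂ v (e₁.atomsAux v n).2 hvm d hd.2
      set m := (e₁.atomsAux v n).2 with hm
      refine ⟨fun x => if x < m then h₁ x else h₂ x, ?_, ?_⟩
      · simp only [if_pos hvm, h₁v]
      · intro α hα
        simp only [ELIQ.atomsAux, Finset.mem_union] at hα
        rcases hα with hα | hα
        · rw [cqatom_holds_congr I (h' := h₁)]
          · exact h₁all α hα
          · intro x hx
            rcases atomsAux_vars e₁ v n α hα x hx with rfl | ⟨_, h2⟩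
            · simp only [if_pos hvm]
            · simp only [if_pos (show x < m from h2)]
        · rw [cqatom_holds_congr I (h' := h₂)]
          · exact h₂all α hα
          · intro x hx
            rcases atomsAux_vars e₂ v m α hα x hx with rfl | ⟨h1, _⟩
            · simp only [if_pos hvm, h₁v, h₂v]
            · simp only [if_neg (not_lt.mpr h1)]

lemma satCQ_iff_esat {D : Type} (I : Interp D) (e : ELIQ) (d : D) :
    I.satCQ e.toCQ d ↔ esat I e d := by
  constructor
  · rintro ⟨h, h0, hall⟩
    have := esat_of_atoms I e 0 1 h hall
    rwa [h0] at this
  · intro hd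
    obtain ⟨h, h0, hall⟩ := atoms_of_esat I e 0 1 Nat.zero_lt_one d hd
    exact ⟨h, h0, hall⟩

lemma atomsAux_inSig {σ : Sig} {e : ELIQ} (he : e.inSig σ) : ∀ v n,
    ∀ α ∈ (e.atomsAux v n).1, α.inSig σ := by
  induction e with
  | top => intro v n α hα; simp [ELIQ.atomsAux] at hα
  | un A =>
      intro v n α hα
      simp [ELIQ.atomsAux] at hα
      subst hα
      exact he
  | exN P e ih =>
      intro v n α hα
      simp only [ELIQ.atomsAux, Finset.mem_insert] at hα
      rcases hα with rfl | hα
      · exact he.1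
      · exact ih he.2 n (n+1) α hα
  | exI P e ih =>
      intro v n α hα
      simp only [ELIQ.atomsAux, Finset.mem_insert] at hα
      rcases hα with rfl | hα
      · exact he.1
      · exact ih he.2 n (n+1) α hα
  | and e₁ e₂ ih₁ ih₂ =>
      intro v n α hα
      simp only [ELIQ.atomsAux, Finset.mem_union] at hα
      rcases hα with hα | hα
      · exact ih₁ he.1 v n α hα
      · exact ih₂ he.2 v _ α hα

lemma toCQ_inSig {σ : Sig} {e : ELIQ} (he : e.inSig σ) : e.toCQ.inSig σ :=
  fun α hα => atomsAux_inSig he 0 1 α hα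

/-! ### Subterm closures -/

def esub : ELIQ → Finset ELIQ
  | .top => {.top}
  | .un A => {.un A}
  | .exN P e => insert (.exN P e) (esub e)
  | .exI P e => insert (.exI P e) (esub e)
  | .and e₁ e₂ => insert (.and e₁ e₂) (esub e₁ ∪ esub e₂)

lemma esub_self (e : ELIQ) : e ∈ esub e := by
  cases e <;> simp [esub]

lemma esub_trans : ∀ e e' : ELIQ, e' ∈ esub e → esub e' ⊆ esub e := by
  intro e
  induction e with
  | top => intro e' h; simp [esub] at h; subst h; exact Finset.Subset.refl _
  | un A => intro e' h; simp [esub] at h; subst h; exact Finset.Subset.refl _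
  | exN P e ih =>
      intro e' h
      simp only [esub, Finset.mem_insert] at h
      rcases h with rfl | h
      · exact Finset.Subset.refl _
      · exact (ih e' h).trans (Finset.subset_insert _ _)
  | exI P e ih =>
      intro e' h
      simp only [esub, Finset.mem_insert] at h
      rcases h with rfl | h
      · exact Finset.Subset.refl _
      · exact (ih e' h).trans (Finset.subset_insert _ _)
  | and e₁ e₂ ih₁ ih₂ =>
      intro e' h
      simp only [esub, Finset.mem_insert, Finset.mem_union] at h
      rcases h with rfl | h | h
      · exact Finset.Subset.refl _
      · exact (ih₁ e' h).trans ((Finset.subset_union_left).trans (Finset.subset_insert _ _))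
      · exact (ih₂ e' h).trans ((Finset.subset_union_right).trans (Finset.subset_insert _ _))

def subcs : AConcept → Finset AConcept
  | .top => {.top}
  | .cn A => {.cn A}
  | .and C C' => insert (.and C C') (subcs C ∪ subcs C')
  | .not C => insert (.not C) (subcs C)
  | .ex S C => insert (.ex S C) (subcs C)

lemma subcs_self (C : AConcept) : C ∈ subcs C := by
  cases C <;> simp [subcs]

lemma subcs_trans : ∀ C C' : AConcept, C' ∈ subcs C → subcs C' ⊆ subcs C := by
  intro C
  induction C with
  | top => intro C' h; simp [subcs] at h; subst h; exact Finset.Subset.refl _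
  | cn A => intro C' h; simp [subcs] at h; subst h; exact Finset.Subset.refl _
  | and C₁ C₂ ih₁ ih₂ =>
      intro C' h
      simp only [subcs, Finset.mem_insert, Finset.mem_union] at h
      rcases h with rfl | h | h
      · exact Finset.Subset.refl _
      · exact (ih₁ C' h).trans ((Finset.subset_union_left).trans (Finset.subset_insert _ _))
      · exact (ih₂ C' h).trans ((Finset.subset_union_right).trans (Finset.subset_insert _ _))
  | not C ih =>
      intro C' h
      simp only [subcs, Finset.mem_insert] at h
      rcases h with rfl | h
      · exact Finset.Subset.refl _
      · exact (ih C' h).trans (Finset.subset_insert _ _)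
  | ex S C ih =>
      intro C' h
      simp only [subcs, Finset.mem_insert] at h
      rcases h with rfl | h
      · exact Finset.Subset.refl _
      · exact (ih C' h).trans (Finset.subset_insert _ _)

/-! ### The type/profile construction -/

instance : Inhabited ALCHIAx := ⟨.ri (.nm 0) (.nm 0)⟩

def axOf (f : Fml) : ALCHIAx :=
  if h : ∃ ax : ALCHIAx, f = ax.fml then h.choose else default

lemma axOf_spec {σ : Sig} {O : Ontology} (hO : IsALCHI σ O) {f : Fml} (hf : f ∈ O) :
    f = (axOf f).fml := by
  obtain ⟨ax, hax, -⟩ := hO f hf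
  have h : ∃ ax : ALCHIAx, f = ax.fml := ⟨ax, hax⟩
  rw [axOf, dif_pos h]
  exact h.choose_spec

def axCl : ALCHIAx → Finset AConcept
  | .ci C C' => subcs C ∪ subcs C'
  | .ri _ _ => ∅

def cl (σ : Sig) (O : Ontology) : Finset AConcept :=
  (O.biUnion fun f => axCl (axOf f)) ∪ σ.1.image AConcept.cn

lemma cl_sig_un {σ : Sig} {O : Ontology} {A : ℕ} (h : A ∈ σ.1) : AConcept.cn A ∈ cl σ O :=
  Finset.mem_union_right _ (Finset.mem_image_of_mem _ h)

lemma cl_closed {σ : Sig} {O : Ontology} : ∀ C ∈ cl σ O, subcs C ⊆ cl σ O := by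
  intro C hC
  rcases Finset.mem_union.1 hC with h | h
  · obtain ⟨f, hf, hCf⟩ := Finset.mem_biUnion.1 h
    refine Finset.Subset.trans ?_ (fun x hx =>
      Finset.mem_union_left _ (Finset.mem_biUnion.2 ⟨f, hf, hx⟩))
    cases hax : axOf f with
    | ci C₁ C₂ =>
        rw [hax] at hCf
        simp only [axCl] at hCf
        rcases Finset.mem_union.1 hCf with h1 | h1
        · exact (subcs_trans C₁ C h1).trans Finset.subset_union_left
        · exact (subcs_trans C₂ C h1).trans Finset.subset_union_right
    | ri S S' => rw [hax] at hCf; simp [axCl] at hCf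
  · obtain ⟨A, _, rfl⟩ := Finset.mem_image.1 h
    intro C' hC'
    simp [subcs] at hC'
    subst hC'
    exact hC

abbrev Profile := Finset AConcept × Finset ELIQ

def profAt (σ : Sig) (O : Ontology) (e : ELIQ) {D : Type} (I : Interp D) (d : D) : Profile :=
  ((cl σ O).filter (fun C => csat I C d), (esub e).filter (fun e' => esat I e' d))

def Real (σ : Sig) (O : Ontology) (e : ELIQ) (p : Profile) : Prop :=
  ∃ (D : Type) (I : Interp D) (d : D), I.modelsO O ∧ p = profAt σ O e I d

def EdgeReal (σ : Sig) (O : Ontology) (e : ELIQ) (P : ℕ) (p p' : Profile) : Prop :=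
  ∃ (D : Type) (I : Interp D) (d d' : D),
    I.modelsO O ∧ p = profAt σ O e I d ∧ p' = profAt σ O e I d' ∧ I.bin P d d'

def AllP (σ : Sig) (O : Ontology) (e : ELIQ) : Finset Profile :=
  ((cl σ O).powerset ×ˢ (esub e).powerset).filter (Real σ O e)

lemma profAt_mem {σ : Sig} {O : Ontology} {e : ELIQ} {D : Type} {I : Interp D} {d : D}
    (hI : I.modelsO O) : profAt σ O e I d ∈ AllP σ O e := by
  refine Finset.mem_filter.2 ⟨Finset.mem_product.2 ⟨?_, ?_⟩, ⟨D, I, d, hI, rfl⟩⟩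
  · exact Finset.mem_powerset.2 (Finset.filter_subset _ _)
  · exact Finset.mem_powerset.2 (Finset.filter_subset _ _)

def idx (σ : Sig) (O : Ontology) (e : ELIQ) (p : Profile) : ℕ :=
  @List.idxOf Profile instBEqOfDecidableEq p (AllP σ O e).toList

def rho (σ : Sig) (O : Ontology) (e : ELIQ) (t0 : Profile) (n : ℕ) : Profile :=
  if (AllP σ O e).toList.getD n t0 ∈ AllP σ O e then (AllP σ O e).toList.getD n t0 else t0

lemma rho_idx {σ : Sig} {O : Ontology} {e : ELIQ} (t0 : Profile) {p : Profile}
    (hp : p ∈ AllP σ O e) : rho σ O e t0 (idx σ O e p) = p := by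
  have hl : p ∈ (AllP σ O e).toList := Finset.mem_toList.2 hp
  have hlt : idx σ O e p < (AllP σ O e).toList.length :=
    (@List.idxOf_lt_length_iff _ instBEqOfDecidableEq _ _ _).2 hl
  have hg : (AllP σ O e).toList.getD (idx σ O e p) t0 = p := by
    rw [List.getD_eq_getElem _ _ hlt]
    exact @List.getElem_idxOf _ instBEqOfDecidableEq _ _ _ hlt
  rw [rho, hg, if_pos hp]

lemma rho_real {σ : Sig} {O : Ontology} {e : ELIQ} {t0 : Profile}
    (ht0 : Real σ O e t0) (n : ℕ) : Real σ O e (rho σ O e t0 n) := by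
  rw [rho]
  split
  · next h => exact (Finset.mem_filter.1 h).2
  · exact ht0

lemma rho_mem {σ : Sig} {O : Ontology} {e : ELIQ} {t0 : Profile}
    (ht0 : t0 ∈ AllP σ O e) (n : ℕ) : rho σ O e t0 n ∈ AllP σ O e := by
  rw [rho]; split
  · next h => exact h
  · exact ht0

/-- The canonical finite countermodel, as an interpretation over `ℕ`. -/
def NI (σ : Sig) (O : Ontology) (e : ELIQ) (t0 : Profile) : Interp ℕ where
  cst := id
  cstInj := fun _ _ h => h
  un A n := AConcept.cn A ∈ (rho σ O e t0 n).1
  bin P n m := EdgeReal σ O e P (rho σ O e t0 n) (rho σ O e t0 m)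

lemma mem_profAt1 {σ : Sig} {O : Ontology} {e : ELIQ} {D : Type} {I : Interp D} {d : D}
    {C : AConcept} : C ∈ (profAt σ O e I d).1 ↔ C ∈ cl σ O ∧ csat I C d :=
  Finset.mem_filter

lemma mem_profAt2 {σ : Sig} {O : Ontology} {e : ELIQ} {D : Type} {I : Interp D} {d : D}
    {e' : ELIQ} : e' ∈ (profAt σ O e I d).2 ↔ e' ∈ esub e ∧ esat I e' d :=
  Finset.mem_filter

/-! ### Holds constructors for ALCHI axioms -/

lemma holds_ci {D : Type} (I : Interp D) (C C' : AConcept) (ν : Var → D)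
    (h : ∀ d, csat I C d → csat I C' d) : Fml.Holds I ν (ALCHIAx.ci C C').fml := by
  simp only [ALCHIAx.fml, Fml.Holds]
  intro d
  rw [fml_csat, fml_csat, Function.update_self]
  exact h d

lemma holds_ri {D : Type} (I : Interp D) (S S' : DLRole) (ν : Var → D)
    (h : ∀ d d', rsat I S d d' → rsat I S' d d') : Fml.Holds I ν (ALCHIAx.ri S S').fml := by
  simp only [ALCHIAx.fml, Fml.Holds]
  intro d d'
  rw [role_holds, role_holds]
  simp only [Function.update_self, Function.update_of_ne (by omega : (0:ℕ) ≠ 1)]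
  exact h d d'

/-! ### Truth lemma for concepts in `NI` -/

section Truth

variable {σ : Sig} {O : Ontology} {e : ELIQ} {t0 : Profile}

set_option maxHeartbeats 1000000 in
lemma NI_truth (ht0 : Real σ O e t0) :
    ∀ C : AConcept, C ∈ cl σ O → ∀ n, csat (NI σ O e t0) C n ↔ C ∈ (rho σ O e t0 n).1 := by
  intro C
  induction C with
  | top =>
      intro hC n
      obtain ⟨D, I, d, hIO, hpd⟩ := rho_real ht0 n
      simp only [csat, true_iff]
      rw [hpd]
      exact mem_profAt1.2 ⟨hC, trivial⟩
  | cn A =>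
      intro hC n
      exact Iff.rfl
  | and C₁ C₂ ih₁ ih₂ =>
      intro hC n
      have hC₁ : C₁ ∈ cl σ O := cl_closed _ hC (by
        simp only [subcs]
        exact Finset.mem_insert_of_mem (Finset.mem_union_left _ (subcs_self C₁)))
      have hC₂ : C₂ ∈ cl σ O := cl_closed _ hC (by
        simp only [subcs]
        exact Finset.mem_insert_of_mem (Finset.mem_union_right _ (subcs_self C₂)))
      obtain ⟨D, I, d, hIO, hpd⟩ := rho_real ht0 n
      constructor
      · rintro ⟨h1, h2⟩
        rw [hpd]
        have e1' := (ih₁ hC₁ n).1 h1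
        have e2' := (ih₂ hC₂ n).1 h2
        rw [hpd] at e1' e2'
        exact mem_profAt1.2 ⟨hC, ⟨(mem_profAt1.1 e1').2, (mem_profAt1.1 e2').2⟩⟩
      · intro h
        rw [hpd] at h
        obtain ⟨-, h1, h2⟩ := mem_profAt1.1 h
        refine ⟨(ih₁ hC₁ n).2 ?_, (ih₂ hC₂ n).2 ?_⟩
        · rw [hpd]; exact mem_profAt1.2 ⟨hC₁, h1⟩
        · rw [hpd]; exact mem_profAt1.2 ⟨hC₂, h2⟩
  | not C ih =>
      intro hC n
      have hC' : C ∈ cl σ O := cl_closed _ hC (by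
        simp only [subcs]
        exact Finset.mem_insert_of_mem (subcs_self C))
      obtain ⟨D, I, d, hIO, hpd⟩ := rho_real ht0 n
      show ¬ csat (NI σ O e t0) C n ↔ _
      rw [ih hC' n, hpd]
      constructor
      · intro h
        refine mem_profAt1.2 ⟨hC, ?_⟩
        show ¬ csat I C d
        intro hc
        exact h (mem_profAt1.2 ⟨hC', hc⟩)
      · intro h hc
        have : ¬ csat I C d := (mem_profAt1.1 h).2
        exact this (mem_profAt1.1 hc).2
  | ex S C ih =>
      intro hC n
      have hC' : C ∈ cl σ O := cl_closed _ hC (by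
        simp only [subcs]
        exact Finset.mem_insert_of_mem (subcs_self C))
      constructor
      · rintro ⟨m, hSm, hCm⟩
        have hCm' : C ∈ (rho σ O e t0 m).1 := (ih hC' m).1 hCm
        cases S with
        | nm P =>
            obtain ⟨D, I, d, d', hIO, hpd, hpd', hbin⟩ := hSm
            rw [hpd'] at hCm'
            have : csat I C d' := (mem_profAt1.1 hCm').2
            rw [hpd]
            exact mem_profAt1.2 ⟨hC, ⟨d', hbin, this⟩⟩
        | inv P =>
            obtain ⟨D, I, d, d', hIO, hpd, hpd', hbin⟩ := hSm
            rw [hpd] at hCm'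
            have : csat I C d := (mem_profAt1.1 hCm').2
            rw [hpd']
            exact mem_profAt1.2 ⟨hC, ⟨d, hbin, this⟩⟩
      · intro h
        obtain ⟨D, I, d, hIO, hpd⟩ := rho_real ht0 n
        rw [hpd] at h
        obtain ⟨-, d', hrole, hCd'⟩ := mem_profAt1.1 h
        set p' := profAt σ O e I d' with hp'
        have hp'mem : p' ∈ AllP σ O e := profAt_mem hIO
        have hrho' : rho σ O e t0 (idx σ O e p') = p' := rho_idx t0 hp'mem
        refine ⟨idx σ O e p', ?_, ?_⟩
        · cases S with
          | nm P =>
              show EdgeReal σ O e P (rho σ O e t0 n) (rho σ O e t0 (idx σ O e p'))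
              rw [hrho', hpd]
              exact ⟨D, I, d, d', hIO, rfl, rfl, hrole⟩
          | inv P =>
              show EdgeReal σ O e P (rho σ O e t0 (idx σ O e p')) (rho σ O e t0 n)
              rw [hrho', hpd]
              exact ⟨D, I, d', d, hIO, rfl, rfl, hrole⟩
        · refine (ih hC' _).2 ?_
          rw [hrho']
          exact mem_profAt1.2 ⟨hC', hCd'⟩

lemma NI_esat (ht0 : Real σ O e t0) :
    ∀ e' : ELIQ, e' ∈ esub e → ∀ n, esat (NI σ O e t0) e' n → e' ∈ (rho σ O e t0 n).2 := by
  intro e'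
  induction e' with
  | top =>
      intro he' n _
      obtain ⟨D, I, d, hIO, hpd⟩ := rho_real ht0 n
      rw [hpd]
      exact mem_profAt2.2 ⟨he', trivial⟩
  | un A =>
      intro he' n h
      have : AConcept.cn A ∈ (rho σ O e t0 n).1 := h
      obtain ⟨D, I, d, hIO, hpd⟩ := rho_real ht0 n
      rw [hpd] at this ⊢
      exact mem_profAt2.2 ⟨he', (mem_profAt1.1 this).2⟩
  | exN P e₁ ih =>
      intro he' n h
      obtain ⟨m, hbin, hsat⟩ := h
      have he₁ : e₁ ∈ esub e := esub_trans _ _ he' (by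
        simp only [esub]
        exact Finset.mem_insert_of_mem (esub_self e₁))
      have h1 : e₁ ∈ (rho σ O e t0 m).2 := ih he₁ m hsat
      obtain ⟨D, I, d, d', hIO, hpd, hpd', hbin'⟩ := hbin
      rw [hpd'] at h1
      rw [hpd]
      exact mem_profAt2.2 ⟨he', ⟨d', hbin', (mem_profAt2.1 h1).2⟩⟩
  | exI P e₁ ih =>
      intro he' n h
      obtain ⟨m, hbin, hsat⟩ := h
      have he₁ : e₁ ∈ esub e := esub_trans _ _ he' (by
        simp only [esub]
        exact Finset.mem_insert_of_mem (esub_self e₁))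
      have h1 : e₁ ∈ (rho σ O e t0 m).2 := ih he₁ m hsat
      obtain ⟨D, I, d, d', hIO, hpd, hpd', hbin'⟩ := hbin
      rw [hpd] at h1
      rw [hpd']
      exact mem_profAt2.2 ⟨he', ⟨d, hbin', (mem_profAt2.1 h1).2⟩⟩
  | and e₁ e₂ ih₁ ih₂ =>
      intro he' n h
      have he₁ : e₁ ∈ esub e := esub_trans _ _ he' (by
        simp only [esub]
        exact Finset.mem_insert_of_mem (Finset.mem_union_left _ (esub_self e₁)))
      have he₂ : e₂ ∈ esub e := esub_trans _ _ he' (by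
        simp only [esub]
        exact Finset.mem_insert_of_mem (Finset.mem_union_right _ (esub_self e₂)))
      have h1 := ih₁ he₁ n h.1
      have h2 := ih₂ he₂ n h.2
      obtain ⟨D, I, d, hIO, hpd⟩ := rho_real ht0 n
      rw [hpd] at h1 h2 ⊢
      exact mem_profAt2.2 ⟨he', ⟨(mem_profAt2.1 h1).2, (mem_profAt2.1 h2).2⟩⟩

lemma NI_modelsO (hO : IsALCHI σ O) (ht0 : Real σ O e t0) :
    (NI σ O e t0).modelsO O := by
  intro f hf ν
  rw [axOf_spec hO hf]
  have hclf : axCl (axOf f) ⊆ cl σ O := fun x hx =>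
    Finset.mem_union_left _ (Finset.mem_biUnion.2 ⟨f, hf, hx⟩)
  cases hax : axOf f with
  | ci C C' =>
      refine holds_ci _ _ _ _ ?_
      have hC : C ∈ cl σ O := by
        refine hclf ?_
        rw [hax]
        simp only [axCl]
        exact Finset.mem_union_left _ (subcs_self C)
      have hC' : C' ∈ cl σ O := by
        refine hclf ?_
        rw [hax]
        simp only [axCl]
        exact Finset.mem_union_right _ (subcs_self C')
      intro n hn
      have h1 := (NI_truth ht0 C hC n).1 hn
      obtain ⟨D, I, d, hIO, hpd⟩ := rho_real ht0 n
      rw [hpd] at h1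
      have h2 : csat I C d := (mem_profAt1.1 h1).2
      have h3 : csat I C' d := by
        refine modelsO_ci hIO ?_ d h2
        rw [← hax, ← axOf_spec hO hf]
        exact hf
      refine (NI_truth ht0 C' hC' n).2 ?_
      rw [hpd]
      exact mem_profAt1.2 ⟨hC', h3⟩
  | ri S S' =>
      refine holds_ri _ _ _ _ ?_
      intro n m hS
      have hOf : (ALCHIAx.ri S S').fml ∈ O := by rw [← hax, ← axOf_spec hO hf]; exact hf
      cases S with
      | nm P =>
          obtain ⟨D, I, d, d', hIO, hpd, hpd', hbin⟩ := hS
          have hS' : rsat I S' d d' := modelsO_ri hIO hOf d d' hbin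
          cases S' with
          | nm P' => exact ⟨D, I, d, d', hIO, hpd, hpd', hS'⟩
          | inv P' => exact ⟨D, I, d', d, hIO, hpd', hpd, hS'⟩
      | inv P =>
          obtain ⟨D, I, dm, dn, hIO, hpdm, hpdn, hbin⟩ := hS
          have hS' : rsat I S' dn dm := modelsO_ri hIO hOf dn dm hbin
          cases S' with
          | nm P' => exact ⟨D, I, dn, dm, hIO, hpdn, hpdm, hS'⟩
          | inv P' => exact ⟨D, I, dm, dn, hIO, hpdm, hpdn, hS'⟩

end Truth

/-! ### The universal negative instance -/

def NegP (σ : Sig) (O : Ontology) (e : ELIQ) : Finset Profile :=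
  (AllP σ O e).filter (fun p => e ∉ p.2)

def Bins (σ : Sig) (O : Ontology) (e : ELIQ) : DataInstance where
  atoms := insert (Atom.top 0)
    ((((AllP σ O e).image (fun p => Atom.top (idx σ O e p)))
      ∪ ((σ.1 ×ˢ AllP σ O e).filter (fun x => AConcept.cn x.1 ∈ x.2.1)).image
          (fun x => Atom.un x.1 (idx σ O e x.2)))
      ∪ (((σ.2 ×ˢ AllP σ O e) ×ˢ AllP σ O e).filter
          (fun x => EdgeReal σ O e x.1.1 x.1.2 x.2)).image
          (fun x => Atom.bin x.1.1 (idx σ O e x.1.2) (idx σ O e x.2)))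
  nonemp := Finset.insert_nonempty _ _

lemma Bins_top {σ : Sig} {O : Ontology} {e : ELIQ} {p : Profile} (hp : p ∈ AllP σ O e) :
    Atom.top (idx σ O e p) ∈ (Bins σ O e).atoms :=
  Finset.mem_insert_of_mem (Finset.mem_union_left _ (Finset.mem_union_left _
    (Finset.mem_image_of_mem _ hp)))

lemma Bins_un {σ : Sig} {O : Ontology} {e : ELIQ} {A : ℕ} {p : Profile}
    (hA : A ∈ σ.1) (hp : p ∈ AllP σ O e) (hcn : AConcept.cn A ∈ p.1) :
    Atom.un A (idx σ O e p) ∈ (Bins σ O e).atoms := by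
  refine Finset.mem_insert_of_mem (Finset.mem_union_left _ (Finset.mem_union_right _ ?_))
  refine Finset.mem_image.2 ⟨(A, p), ?_, rfl⟩
  exact Finset.mem_filter.2 ⟨Finset.mem_product.2 ⟨hA, hp⟩, hcn⟩

lemma Bins_bin {σ : Sig} {O : Ontology} {e : ELIQ} {P : ℕ} {p p' : Profile}
    (hP : P ∈ σ.2) (hp : p ∈ AllP σ O e) (hp' : p' ∈ AllP σ O e)
    (hE : EdgeReal σ O e P p p') :
    Atom.bin P (idx σ O e p) (idx σ O e p') ∈ (Bins σ O e).atoms := by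
  refine Finset.mem_insert_of_mem (Finset.mem_union_right _ ?_)
  refine Finset.mem_image.2 ⟨((P, p), p'), ?_, rfl⟩
  refine Finset.mem_filter.2 ⟨?_, hE⟩
  exact Finset.mem_product.2 ⟨Finset.mem_product.2 ⟨hP, hp⟩, hp'⟩

lemma NI_modelsD {σ : Sig} {O : Ontology} {e : ELIQ} {t0 : Profile}
    (ht0 : t0 ∈ AllP σ O e) : (NI σ O e t0).modelsD (Bins σ O e) := by
  intro α hα
  rcases Finset.mem_insert.1 hα with rfl | hα
  · trivial
  rcases Finset.mem_union.1 hα with hα | hα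
  · rcases Finset.mem_union.1 hα with hα | hα
    · obtain ⟨p, hp, rfl⟩ := Finset.mem_image.1 hα
      trivial
    · obtain ⟨⟨A, p⟩, hp, rfl⟩ := Finset.mem_image.1 hα
      obtain ⟨hmem, hcn⟩ := Finset.mem_filter.1 hp
      have hpA : p ∈ AllP σ O e := (Finset.mem_product.1 hmem).2
      show AConcept.cn A ∈ (rho σ O e t0 (idx σ O e p)).1
      rw [rho_idx t0 hpA]
      exact hcn
  · obtain ⟨⟨⟨P, p⟩, p'⟩, hp, rfl⟩ := Finset.mem_image.1 hα
    obtain ⟨hmem, hE⟩ := Finset.mem_filter.1 hp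
    have hpA : p ∈ AllP σ O e := (Finset.mem_product.1 (Finset.mem_product.1 hmem).1).2
    have hp'A : p' ∈ AllP σ O e := (Finset.mem_product.1 hmem).2
    show EdgeReal σ O e P (rho σ O e t0 (idx σ O e p)) (rho σ O e t0 (idx σ O e p'))
    rw [rho_idx t0 hpA, rho_idx t0 hp'A]
    exact hE

/-! ### The induced instance: positive example lemmas -/

lemma cert_hat (O : Ontology) (q : CQ) : cert O (inducedDI q) q 0 := by
  intro D I hIO hID
  refine ⟨fun v => I.cst v, rfl, ?_⟩
  intro α hα
  have hmem : CQAtom.toAtom id α ∈ (inducedDI q).atoms :=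
    Finset.mem_insert_of_mem (Finset.mem_image_of_mem _ hα)
  have := hID _ hmem
  cases α with
  | top v => trivial
  | un A v => exact this
  | bin P v w => exact this

lemma contains_of_cert_hat {O : Ontology} (hpure : ∀ g ∈ O, g.pure) {q q' : CQ}
    (h : cert O (inducedDI q) q' 0) : containsO O q q' := by
  intro A a ha hc D I hIO hID
  obtain ⟨h0, h00, hall⟩ := hc D I hIO hID
  have := cert_transfer hpure I h0 hIO ?_ h
  · rwa [h00] at this
  · intro α hα
    rcases Finset.mem_insert.1 hα with rfl | hα
    · trivial
    · obtain ⟨β, hβ, rfl⟩ := Finset.mem_image.1 hα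
      have := hall β hβ
      cases β with
      | top v => trivial
      | un A v => exact this
      | bin P v w => exact this

/-! ### Main theorem -/

theorem statement9' (σ : Sig) (O : Ontology) (hO : IsALCHI σ O)
    (e : ELIQ) (heσ : e.inSig σ) (hsat : CQ.satWrt O e.toCQ) :
    ∃ N : Finset (DataInstance × Const),
      uniqChar O (ELIQclass σ) e.toCQ ⟨{(inducedDI e.toCQ, 0)}, N⟩ := by
  classical
  obtain ⟨Dw0, I0, d0, hI0O, hsat0⟩ := hsat
  have hpure := alchi_pure hO
  set t0 := profAt σ O e I0 d0 with ht0def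
  have ht0R : Real σ O e t0 := ⟨_, I0, d0, hI0O, rfl⟩
  have ht0mem : t0 ∈ AllP σ O e := profAt_mem hI0O
  refine ⟨(NegP σ O e).image (fun p => (Bins σ O e, idx σ O e p)), ?_, ?_, ?_⟩
  -- well-formedness
  · constructor
    · intro p hp
      rw [Finset.mem_singleton] at hp
      subst hp
      exact Finset.mem_biUnion.2 ⟨Atom.top 0, Finset.mem_insert_self _ _, by simp [Atom.consts]⟩
    · intro pr hpr
      obtain ⟨p, hp, rfl⟩ := Finset.mem_image.1 hpr
      have hpA : p ∈ AllP σ O e := (Finset.mem_filter.1 hp).1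
      exact Finset.mem_biUnion.2 ⟨Atom.top (idx σ O e p), Bins_top hpA, by simp [Atom.consts]⟩
  -- the target query fits
  · constructor
    · intro p hp
      rw [Finset.mem_singleton] at hp
      subst hp
      exact cert_hat O e.toCQ
    · intro pr hpr hcert
      obtain ⟨p, hp, rfl⟩ := Finset.mem_image.1 hpr
      have hpA : p ∈ AllP σ O e := (Finset.mem_filter.1 hp).1
      have hsatc := hcert ℕ (NI σ O e t0) (NI_modelsO hO ht0R) (NI_modelsD ht0mem)
      have hesat := (satCQ_iff_esat (NI σ O e t0) e _).1 hsatc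
      have hmem : e ∈ (rho σ O e t0 (idx σ O e p)).2 :=
        NI_esat ht0R e (esub_self e) _ hesat
      rw [rho_idx t0 hpA] at hmem
      exact (Finset.mem_filter.1 hp).2 hmem
  -- unique characterisation
  · rintro q' ⟨e', he'σ, rfl⟩ hfits
    have hpos : cert O (inducedDI e.toCQ) e'.toCQ 0 :=
      hfits.1 _ (Finset.mem_singleton_self _)
    constructor
    · exact contains_of_cert_hat hpure hpos
    · by_contra hnc
      rw [containsO] at hnc
      push_neg at hnc
      obtain ⟨A, a, ha, hqa', hnqa⟩ := hnc
      -- restrict the counterexample instance to the signature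
      set A' : DataInstance :=
        ⟨insert (Atom.top a) (A.atoms.filter (fun α => α.inSig σ)),
          Finset.insert_nonempty _ _⟩ with hA'def
      have hq'A' : cert O A' e'.toCQ a := by
        intro DJ I hIO hID
        have hsatO : (satur σ I).modelsO O :=
          fun f hf ν => (satur_holds I f (alchi_inSig hO f hf) ν).2 (hIO f hf ν)
        have hsatD : (satur σ I).modelsD A := by
          intro α hα
          by_cases hσα : α.inSig σ
          · have hIα := hID α (Finset.mem_insert_of_mem (Finset.mem_filter.2 ⟨hα, hσα⟩))
            cases α with
            | top c => trivial
            | un A'' c =>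
                have h' : A'' ∈ σ.1 := hσα
                show (if A'' ∈ σ.1 then I.un A'' (I.cst c) else True)
                rw [if_pos h']
                exact hIα
            | bin P c c' =>
                have h' : P ∈ σ.2 := hσα
                show (if P ∈ σ.2 then I.bin P (I.cst c) (I.cst c') else True)
                rw [if_pos h']
                exact hIα
          · cases α with
            | top c => trivial
            | un A'' c =>
                have h' : ¬ A'' ∈ σ.1 := hσα
                show (if A'' ∈ σ.1 then I.un A'' (I.cst c) else True)
                rw [if_neg h']
                trivial
            | bin P c c' =>
                have h' : ¬ P ∈ σ.2 := hσα
                show (if P ∈ σ.2 then I.bin P (I.cst c) (I.cst c') else True)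
                rw [if_neg h']
                trivial
        have := hqa' DJ (satur σ I) hsatO hsatD
        exact (satur_satCQ (toCQ_inSig he'σ)).1 this
      have hnqA' : ¬ cert O A' e.toCQ a := by
        intro hcA'
        apply hnqa
        intro DJ I hIO hID
        refine hcA' DJ I hIO ?_
        intro α hα
        rcases Finset.mem_insert.1 hα with rfl | hα
        · trivial
        · exact hID α (Finset.mem_filter.1 hα).1
      have hex : ∃ (Dw : Type) (Iw : Interp Dw),
          Iw.modelsO O ∧ Iw.modelsD A' ∧ ¬ Iw.satCQ e.toCQ (Iw.cst a) := by
        by_contra hno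
        apply hnqA'
        intro Dw Iw hIO hID
        by_contra hnot
        exact hno ⟨Dw, Iw, hIO, hID, hnot⟩
      obtain ⟨Dw, Iw, hIwO, hIwD, hnm⟩ := hex
      set pa := profAt σ O e Iw (Iw.cst a) with hpadef
      have hpaAll : pa ∈ AllP σ O e := profAt_mem hIwO
      have hpaNeg : pa ∈ NegP σ O e := by
        refine Finset.mem_filter.2 ⟨hpaAll, ?_⟩
        intro hc
        exact hnm ((satCQ_iff_esat Iw e _).2 (mem_profAt2.1 hc).2)
      have hmemN : (Bins σ O e, idx σ O e pa) ∈
          (NegP σ O e).image (fun p => (Bins σ O e, idx σ O e p)) :=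
        Finset.mem_image_of_mem _ hpaNeg
      refine hfits.2 _ hmemN ?_
      -- `e'.toCQ` certifies the negative example: contradiction
      intro DJ J hJO hJD
      have htr := cert_transfer hpure J
        (fun c => J.cst (idx σ O e (profAt σ O e Iw (Iw.cst c)))) hJO ?_ hq'A'
      · exact htr
      · intro α hα
        rcases Finset.mem_insert.1 hα with rfl | hα
        · trivial
        · obtain ⟨hαA, hασ⟩ := Finset.mem_filter.1 hα
          have hIα := hIwD α (Finset.mem_insert_of_mem (Finset.mem_filter.2 ⟨hαA, hασ⟩))
          cases α with
          | top c => trivial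
          | un A'' c =>
              have hA'' : A'' ∈ σ.1 := hασ
              have hc1 : AConcept.cn A'' ∈ (profAt σ O e Iw (Iw.cst c)).1 :=
                mem_profAt1.2 ⟨cl_sig_un hA'', hIα⟩
              have hB := Bins_un hA'' (profAt_mem hIwO) hc1
              exact hJD _ hB
          | bin P c c' =>
              have hP : P ∈ σ.2 := hασ
              have hE : EdgeReal σ O e P (profAt σ O e Iw (Iw.cst c))
                  (profAt σ O e Iw (Iw.cst c')) :=
                ⟨Dw, Iw, Iw.cst c, Iw.cst c', hIwO, rfl, rfl, hIα⟩
              have hB := Bins_bin hP (profAt_mem hIwO) (profAt_mem hIwO) hE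
              exact hJD _ hB

end

/-- every `σ`-ELIQ satisfiable wrt an ALCHI ontology in `σ` has a
singular⁺ characterisation within `ELIQ^σ` (with `q̂` the induced instance). -/
theorem statement9 (σ : Sig) (O : Ontology) (hO : IsALCHI σ O)
    (e : ELIQ) (heσ : e.inSig σ) (hsat : CQ.satWrt O e.toCQ) :
    ∃ N : Finset (DataInstance × Const),
      uniqChar O (ELIQclass σ) e.toCQ ⟨{(inducedDI e.toCQ, 0)}, N⟩ := by
  exact statement9' σ O hO e heσ hsat

end OMQLean
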